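/- arXiv:2304.14733 — 5 statements merged into one kernel-verified Lean document; each statement's English description precedes it below -/
import Mathlib

section
/- For a permutation pattern v of length d ≥ 3, the following are equivalent: (1) v is monotone (v = 12···d or v = d···21); (2) the overlap set O_v equals {1,...,d-1}; (3) d-1 ∈ O_v. Here O_v is the set of indices 1 ≤ i < d such that red(v_1,...,v_i) = red(v_{d-i+1},...,v_d). -/
open Finset MeasureTheory Polynomial

attribute [local instance] Classical.propDecidable

/-- `w` (restricted to positions `i, i+1, ..., i+d-1`) is a consecutive occurrence of the
pattern `v` (whose entries are `v 0, ..., v (d-1)`), i.e. the window is order-isomorphic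
(respecting equalities) to the pattern. -/
def consecOcc {α : Type*} [LinearOrder α] (d : ℕ) (v : ℕ → ℕ) (w : ℕ → α) (i : ℕ) : Prop :=
  ∀ p q, p < d → q < d →
    ((w (i + p) < w (i + q) ↔ v p < v q) ∧ (w (i + p) = w (i + q) ↔ v p = v q))

/-- number of consecutive occurrences of the pattern `v` of length `d` in the word `w`
of length `n`. -/
noncomputable def conCount {α : Type*} [LinearOrder α] (d n : ℕ) (v : ℕ → ℕ) (w : ℕ → α) : ℕ :=
  ((Finset.range n).filter (fun i => i + d ≤ n ∧ consecOcc d v w i)).card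

/-- the word (ℕ-valued, 0-indexed) associated with a permutation of `Fin n`. -/
def permWord {n : ℕ} (σ : Equiv.Perm (Fin n)) : ℕ → ℕ :=
  fun j => if h : j < n then (σ ⟨j, h⟩ : ℕ) else 0

/-- `g_r^v(S_n)`: number of permutations of length `n` with exactly `r` consecutive
occurrences of the pattern `v` (of length `d`). -/
noncomputable def gPerm (d : ℕ) (v : ℕ → ℕ) (n r : ℕ) : ℕ :=
  Nat.card {σ : Equiv.Perm (Fin n) // conCount d n v (permWord σ) = r}

/-- the word (ℕ-valued, 0-indexed) associated with a `k`-ary word of length `n`. -/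
def wordFn {k n : ℕ} (w : Fin n → Fin k) : ℕ → ℕ :=
  fun j => if h : j < n then (w ⟨j, h⟩ : ℕ) else 0

/-- `g_r^v([k]^n)`: number of `k`-ary words of length `n` with exactly `r` consecutive
occurrences of the pattern `v` (of length `d`). -/
noncomputable def gWord (d k n r : ℕ) (v : ℕ → ℕ) : ℕ :=
  Nat.card {w : Fin n → Fin k // conCount d n v (wordFn w) = r}

/-- `i` is in the overlap set `O_v` of the pattern `v` of length `d`:
`1 ≤ i < d` and the first `i` entries have the same relative order as the last `i` entries. -/
def inOverlap (d : ℕ) (v : ℕ → ℕ) (i : ℕ) : Prop :=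
  1 ≤ i ∧ i < d ∧ ∀ p q, p < i → q < i → (v p < v q ↔ v (d - i + p) < v (d - i + q))

/-- For a pattern `v ∈ S_d` with `d ≥ 3`, the following are equivalent:
(1) `v` is monotone; (2) `O_v = {1,…,d-1}`; (3) `d-1 ∈ O_v`. -/
theorem monotone_iff_full_overlap_iff_dsub1_overlap (d : ℕ) (hd : 3 ≤ d)
    (v : Equiv.Perm (Fin d)) :
    (((∀ p q : Fin d, p < q → v p < v q) ∨ (∀ p q : Fin d, p < q → v q < v p)) ↔
      (∀ i, inOverlap d (permWord v) i ↔ 1 ≤ i ∧ i < d)) ∧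
    ((∀ i, inOverlap d (permWord v) i ↔ 1 ≤ i ∧ i < d) ↔
      inOverlap d (permWord v) (d - 1)) := by

  have hWj : ∀ j (h : j < d), permWord v j = (v ⟨j, h⟩ : ℕ) := by
    intro j h; simp [permWord, h]
  have hlt : ∀ p q (hp : p < d) (hq : q < d),
      (permWord v p < permWord v q ↔ v ⟨p, hp⟩ < v ⟨q, hq⟩) := by
    intro p q hp hq
    rw [hWj p hp, hWj q hq]
    exact (Fin.lt_def).symm
  -- helper: increasing gives full iff
  have mono_iff : ∀ (f : Equiv.Perm (Fin d)), (∀ p q : Fin d, p < q → f p < f q) →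
      ∀ a b : Fin d, f a < f b ↔ a < b := by
    intro f hf a b
    constructor
    · intro h
      rcases lt_trichotomy a b with h1 | h1 | h1
      · exact h1
      · subst h1; exact absurd h (lt_irrefl _)
      · exact absurd (hf _ _ h1) (not_lt.2 h.le)
    · exact hf a b
  have anti_iff : ∀ (f : Equiv.Perm (Fin d)), (∀ p q : Fin d, p < q → f q < f p) →
      ∀ a b : Fin d, f a < f b ↔ b < a := by
    intro f hf a b
    constructor
    · intro h
      rcases lt_trichotomy a b with h1 | h1 | h1
      · exact absurd (hf _ _ h1) (not_lt.2 h.le)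
      · subst h1; exact absurd h (lt_irrefl _)
      · exact h1
    · exact hf b a
  have h1 : ((∀ p q : Fin d, p < q → v p < v q) ∨ (∀ p q : Fin d, p < q → v q < v p)) →
      (∀ i, inOverlap d (permWord v) i ↔ 1 ≤ i ∧ i < d) := by
    intro hmono i
    constructor
    · rintro ⟨a, b, -⟩; exact ⟨a, b⟩
    · rintro ⟨hi1, hi2⟩
      refine ⟨hi1, hi2, ?_⟩
      intro p q hp hq
      have hpd : p < d := hp.trans hi2
      have hqd : q < d := hq.trans hi2
      have hpd' : d - i + p < d := by omega
      have hqd' : d - i + q < d := by omega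
      rw [hlt p q hpd hqd, hlt _ _ hpd' hqd']
      rcases hmono with hinc | hdec
      · rw [mono_iff v hinc, mono_iff v hinc]
        simp only [Fin.lt_def]
        omega
      · rw [anti_iff v hdec, anti_iff v hdec]
        simp only [Fin.lt_def]
        omega
  have h2 : (∀ i, inOverlap d (permWord v) i ↔ 1 ≤ i ∧ i < d) →
      inOverlap d (permWord v) (d - 1) := by
    intro h; exact (h (d - 1)).mpr ⟨by omega, by omega⟩
  have h3 : inOverlap d (permWord v) (d - 1) →
      ((∀ p q : Fin d, p < q → v p < v q) ∨ (∀ p q : Fin d, p < q → v q < v p)) := by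
    rintro ⟨-, -, hshift⟩
    have hdd : d - (d - 1) = 1 := by omega
    -- shift : for p q < d-1, W p < W q ↔ W (p+1) < W (q+1)
    have shift : ∀ p q, p < d - 1 → q < d - 1 →
        (permWord v p < permWord v q ↔ permWord v (p + 1) < permWord v (q + 1)) := by
      intro p q hp hq
      have := hshift p q hp hq
      rwa [hdd, Nat.add_comm 1 p, Nat.add_comm 1 q] at this
    -- the two entries v 0, v 1 are comparable
    have hne : permWord v 0 ≠ permWord v 1 := by
      rw [hWj 0 (by omega), hWj 1 (by omega)]
      intro h
      have : (⟨0, by omega⟩ : Fin d) = ⟨1, by omega⟩ := v.injective (Fin.val_injective h)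
      simp [Fin.ext_iff] at this
    rcases Ne.lt_or_gt hne with hcase | hcase
    · left
      -- all consecutive increases
      have step : ∀ p, p + 1 < d → permWord v p < permWord v (p + 1) := by
        intro p
        induction p with
        | zero => intro _; exact hcase
        | succ n ih =>
          intro h
          have hn : n + 1 < d := by omega
          have := (shift n (n + 1) (by omega) (by omega)).mp (ih hn)
          exact this
      have chain : ∀ k p, p + k + 1 < d → permWord v p < permWord v (p + k + 1) := by
        intro k
        induction k with
        | zero => intro p h; exact step p h
        | succ n ih =>
          intro p h
          have := ih p (by omega)
          have h2' := step (p + n + 1) (by omega)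
          calc permWord v p < permWord v (p + n + 1) := this
            _ < permWord v (p + n + 1 + 1) := h2'
            _ = permWord v (p + (n + 1) + 1) := by ring_nf
      intro p q hpq
      have hp : (p : ℕ) < d := p.isLt
      have hq : (q : ℕ) < d := q.isLt
      have hpq' : (p : ℕ) < (q : ℕ) := hpq
      have := chain ((q : ℕ) - (p : ℕ) - 1) (p : ℕ) (by omega)
      have heq : (p : ℕ) + ((q : ℕ) - (p : ℕ) - 1) + 1 = (q : ℕ) := by omega
      rw [heq] at this
      rw [hlt _ _ hp hq] at this
      simpa using this
    · right
      have step : ∀ p, p + 1 < d → permWord v (p + 1) < permWord v p := by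
        intro p
        induction p with
        | zero => intro _; exact hcase
        | succ n ih =>
          intro h
          have hn : n + 1 < d := by omega
          have := (shift (n + 1) n (by omega) (by omega)).mp (ih hn)
          exact this
      have chain : ∀ k p, p + k + 1 < d → permWord v (p + k + 1) < permWord v p := by
        intro k
        induction k with
        | zero => intro p h; exact step p h
        | succ n ih =>
          intro p h
          have := ih p (by omega)
          have h2' := step (p + n + 1) (by omega)
          calc permWord v (p + (n + 1) + 1) = permWord v (p + n + 1 + 1) := by ring_nf
            _ < permWord v (p + n + 1) := h2'
            _ < permWord v p := this
      intro p q hpq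
      have hp : (p : ℕ) < d := p.isLt
      have hq : (q : ℕ) < d := q.isLt
      have hpq' : (p : ℕ) < (q : ℕ) := hpq
      have := chain ((q : ℕ) - (p : ℕ) - 1) (p : ℕ) (by omega)
      have heq : (p : ℕ) + ((q : ℕ) - (p : ℕ) - 1) + 1 = (q : ℕ) := by omega
      rw [heq] at this
      rw [hlt _ _ hq hp] at this
      simpa using this
  exact ⟨⟨h1, fun h => h3 (h2 h)⟩, ⟨h2, fun h => h1 (h3 h)⟩⟩
end

section
/- If two permutation patterns v, w ∈ S_d are strongly c-Wilf-equivalent in words (i.e., g_r^v([k]^n) = g_r^w([k]^n) for all alphabet sizes k, lengths n, and r ∈ ℕ₀), then they are strongly c-Wilf-equivalent in permutations (g_r^v(S_n) = g_r^w(S_n) for all n and r). -/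
open Finset MeasureTheory Polynomial

attribute [local instance] Classical.propDecidable

-- auxiliary

lemma conCount_congr {d n : ℕ} {v : ℕ → ℕ} {u u' : ℕ → ℕ}
    (h : ∀ i j, i < n → j < n → ((u i < u j ↔ u' i < u' j) ∧ (u i = u j ↔ u' i = u' j))) :
    conCount d n v u = conCount d n v u' := by
  unfold conCount
  congr 1
  apply Finset.filter_congr
  intro i hi
  simp only [Finset.mem_range] at hi
  refine and_congr_right fun hid => ?_
  unfold consecOcc
  refine forall_congr' fun p => forall_congr' fun q => ?_
  constructor <;> intro H hp hq <;>
  · have hpn : i + p < n := by omega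
    have hqn : i + q < n := by omega
    have h1 := (h _ _ hpn hqn).1
    have h2 := (h _ _ hpn hqn).2
    have := H hp hq
    constructor
    · rw [← this.1]; tauto
    · rw [← this.2]; tauto

lemma conCount_wordFn_congr {d n k j : ℕ} {v : ℕ → ℕ} (u : Fin n → Fin k) (u' : Fin n → Fin j)
    (hlt : ∀ a b : Fin n, u a < u b ↔ u' a < u' b) :
    conCount d n v (wordFn u) = conCount d n v (wordFn u') := by
  apply conCount_congr
  intro i jj hi hj
  have heq : ∀ a b : Fin n, u a = u b ↔ u' a = u' b := by
    intro a b
    simp only [le_antisymm_iff, ← not_lt, hlt]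
  have Hi : wordFn u i = (u ⟨i, hi⟩ : ℕ) := dif_pos hi
  have Hj : wordFn u jj = (u ⟨jj, hj⟩ : ℕ) := dif_pos hj
  have Hi' : wordFn u' i = (u' ⟨i, hi⟩ : ℕ) := dif_pos hi
  have Hj' : wordFn u' jj = (u' ⟨jj, hj⟩ : ℕ) := dif_pos hj
  rw [Hi, Hj, Hi', Hj']
  constructor
  · rw [Fin.val_fin_lt, Fin.val_fin_lt]; exact hlt _ _
  · rw [Fin.val_eq_val, Fin.val_eq_val]; exact heq _ _

noncomputable def Wset (d n r : ℕ) (v : ℕ → ℕ) (k : ℕ) : Finset (Fin n → Fin k) :=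
  univ.filter (fun u => conCount d n v (wordFn u) = r)

noncomputable def Sset (d n r : ℕ) (v : ℕ → ℕ) (j : ℕ) : Finset (Fin n → Fin j) :=
  univ.filter (fun u => Function.Surjective u ∧ conCount d n v (wordFn u) = r)

lemma gWord_eq_Wset (d k n r : ℕ) (v : ℕ → ℕ) :
    Nat.card {w : Fin n → Fin k // conCount d n v (wordFn w) = r} = (Wset d n r v k).card := by
  rw [Nat.card_eq_fintype_card, Fintype.card_subtype]
  rfl

lemma fiber_card (d n r k j : ℕ) (v : ℕ → ℕ) (T : Finset (Fin k)) (hT : T.card = j) :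
    ((Wset d n r v k).filter (fun u => Finset.univ.image u = T)).card = (Sset d n r v j).card := by
  set e := T.orderIsoOfFin hT with he
  refine Finset.card_bij'
    (fun u hu => fun a => e.symm ⟨u a, by
      simp only [Finset.mem_filter, Wset, mem_univ, true_and] at hu
      rw [← hu.2]; exact Finset.mem_image_of_mem u (mem_univ a)⟩)
    (fun u' hu' => fun a => (e (u' a) : Fin k)) ?_ ?_ ?_ ?_
  · intro u hu
    have hu' := hu
    simp only [Finset.mem_filter, Wset, mem_univ, true_and] at hu'
    simp only [Sset, Finset.mem_filter, mem_univ, true_and]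
    constructor
    · intro y
      have hy : (e y : Fin k) ∈ Finset.univ.image u := by
        rw [hu'.2]; exact (e y).2
      obtain ⟨a, -, ha⟩ := Finset.mem_image.mp hy
      refine ⟨a, ?_⟩
      simp only
      rw [OrderIso.symm_apply_eq]
      exact Subtype.ext ha
    · refine (conCount_wordFn_congr _ u ?_).trans hu'.1
      intro a b
      exact (OrderIso.lt_iff_lt e.symm).trans Subtype.mk_lt_mk
  · intro u' hu'
    have hs := hu'
    simp only [Sset, Finset.mem_filter, mem_univ, true_and] at hs
    simp only [Finset.mem_filter, Wset, mem_univ, true_and]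
    refine ⟨?_, ?_⟩
    · refine (conCount_wordFn_congr _ u' ?_).trans hs.2
      intro a b
      rw [Subtype.coe_lt_coe, OrderIso.lt_iff_lt]
    · ext x
      simp only [Finset.mem_image, mem_univ, true_and]
      constructor
      · rintro ⟨a, ha⟩; rw [← ha]; exact (e (u' a)).2
      · intro hx
        obtain ⟨a, ha⟩ := hs.1 (e.symm ⟨x, hx⟩)
        exact ⟨a, by rw [ha, OrderIso.apply_symm_apply]⟩
  · intro u hu
    funext a
    simp
  · intro u' hu'
    funext a
    simp only
    rw [show (⟨(e (u' a) : Fin k), _⟩ : T) = e (u' a) from Subtype.ext rfl,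
      OrderIso.symm_apply_apply]

lemma Wcard (d n r k : ℕ) (v : ℕ → ℕ) :
    (Wset d n r v k).card = ∑ j ∈ Finset.range (k + 1), k.choose j * (Sset d n r v j).card := by
  rw [Finset.card_eq_sum_card_fiberwise
    (f := fun u : Fin n → Fin k => Finset.univ.image u) (t := Finset.univ) (fun x _ => mem_univ _)]
  rw [← Finset.sum_fiberwise_of_maps_to (g := fun T : Finset (Fin k) => T.card)
    (t := Finset.range (k + 1)) (fun T _ => by
      simp only [Finset.mem_range]
      have := Finset.card_le_univ T
      simp only [Finset.card_univ, Fintype.card_fin] at this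
      omega)]
  apply Finset.sum_congr rfl
  intro j hj
  rw [Finset.sum_congr rfl (fun T hT => fiber_card d n r k j v T (by
    simp only [Finset.mem_filter] at hT; exact hT.2))]
  rw [Finset.sum_const, smul_eq_mul]
  congr 1
  rw [← Fintype.card_subtype]
  rw [Fintype.card_finset_len]
  simp

lemma Sset_eq (d n r : ℕ) (v w : ℕ → ℕ)
    (h : ∀ k, (Wset d n r v k).card = (Wset d n r w k).card) :
    ∀ k, (Sset d n r v k).card = (Sset d n r w k).card := by
  intro k
  induction k using Nat.strong_induction_on with
  | _ k ih =>
    have h1 := h k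
    rw [Wcard, Wcard, Finset.sum_range_succ, Finset.sum_range_succ,
      Finset.sum_congr rfl (fun j hj => by
        rw [ih j (Finset.mem_range.mp hj)])] at h1
    simpa using h1

lemma gPerm_eq_Sset (d n r : ℕ) (V : ℕ → ℕ) : gPerm d V n r = (Sset d n r V n).card := by
  unfold gPerm
  rw [Nat.card_eq_fintype_card, Fintype.card_subtype]
  refine Finset.card_bij'
    (fun σ _ => ⇑σ)
    (fun u hu => Equiv.ofBijective u (Finite.surjective_iff_bijective.mp (by
      simp only [Sset, Finset.mem_filter, mem_univ, true_and] at hu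
      exact hu.1))) ?_ ?_ ?_ ?_
  · intro σ hσ
    simp only [Finset.mem_filter, mem_univ, true_and] at hσ
    simp only [Sset, Finset.mem_filter, mem_univ, true_and]
    exact ⟨σ.surjective, hσ⟩
  · intro u hu
    have hs := hu
    simp only [Sset, Finset.mem_filter, mem_univ, true_and] at hs
    simp only [Finset.mem_filter, mem_univ, true_and]
    exact hs.2
  · intro σ hσ
    exact Equiv.ext fun x => rfl
  · intro u hu
    rfl

/-- Strong c-Wilf-equivalence in words implies strong c-Wilf-equivalence in permutations. -/
theorem strong_cWilf_words_to_perms (d : ℕ) (v w : Equiv.Perm (Fin d))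
    (h : ∀ k n r : ℕ, gWord d k n r (permWord v) = gWord d k n r (permWord w)) :
    ∀ n r : ℕ, gPerm d (permWord v) n r = gPerm d (permWord w) n r := by
  intro n r
  have hW : ∀ k, (Wset d n r (permWord v) k).card = (Wset d n r (permWord w) k).card := by
    intro k
    have hk := h k n r
    unfold gWord at hk
    rwa [gWord_eq_Wset, gWord_eq_Wset] at hk
  rw [gPerm_eq_Sset, gPerm_eq_Sset]
  exact Sset_eq d n r _ _ hW n
end

section
/- Let v ∈ S_d be a non-overlapping pattern, let a_n^{(1)}(v) := g_0^v(S_{n+d-1})/(n+d-1)!, and for n ≥ d set m := ⌊(n-1)/(d-1)⌋. Then a_n^{(1)}(v) - a_{n-1}^{(1)}(v) + (1/d!) a_{n-d}^{(1)}(v) + Σ_{j=1}^{m} (-1)^j L_j(v) a_{n-jd+j-d}^{(1)}(v) = 0, where L_j(v) := P(B_1^c ∩ B_d^c ∩ B_{2d-1}^c ∩ ··· ∩ B_{j(d-1)+1}^c) is the probability that a uniform random permutation of length (j+1)d - j has consecutive occurrences of v starting at positions 1, d, 2d-1, ..., j(d-1)+1. -/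
open Finset MeasureTheory Polynomial

attribute [local instance] Classical.propDecidable

/-!
Write `a_k` for the probability that a uniform permutation of length `k + d - 1` avoids `v`,
and `F(c, j)` for the probability that a uniform permutation of length `c + (j + 1)d - j` avoids
`v` before position `c` and has the chain of occurrences at `c, c + (d - 1), …, c + j(d - 1)`,
the last of which ends the permutation.

A permutation is determined by the set of values of a prefix and the standardizations of the
prefix and of the complementary suffix, so these two standardizations are independent and
uniform. Hence avoiding `v` before `c` while having a chain of `j + 1` occurrences from
`c + d - 1` on has probability `a_c L_j`. Splitting this event by whether `v` occurs at `c`, and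
using that a non-overlapping pattern cannot occur at two positions less than `d - 1` apart, gives
`F(c + d - 1, j) + F(c, j + 1) = a_c L_j`, while `F(c, j) = L_j` for `c < d - 1`. Unrolling
expresses `F(c, j)` as an alternating sum of the terms `L_{j+t} a_{c-(t+1)(d-1)}`; the recursion
is the case `a_{n-1} - a_n = F(n - 1, 0)`, together with `L_0 = 1/d!`.
-/

def SameOrderAt {α β : Type*} [LT α] [LT β] (w : ℕ → α) (i : ℕ) (w' : ℕ → β) (i' k : ℕ) :
    Prop :=
  ∀ p q, p < k → q < k → (w (i + p) < w (i + q) ↔ w' (i' + p) < w' (i' + q))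

section SameOrderAt

variable {α β : Type*} [LinearOrder α] [LinearOrder β] {w : ℕ → α} {w' : ℕ → β} {i i' k : ℕ}

lemma SameOrderAt.shift (h : SameOrderAt w i w' i' k) {r l : ℕ} (hrl : r + l ≤ k) :
    SameOrderAt w (i + r) w' (i' + r) l := fun p q hp hq => by
  simpa only [Nat.add_assoc] using h (r + p) (r + q) (by omega) (by omega)

lemma SameOrderAt.consecOcc_iff (h : SameOrderAt w i w' i' k) {d : ℕ} {v : ℕ → ℕ}
    (hd : d ≤ k) : consecOcc d v w i ↔ consecOcc d v w' i' := by
  have eq_iff {p q : ℕ} (hp : p < k) (hq : q < k) :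
      w (i + p) = w (i + q) ↔ w' (i' + p) = w' (i' + q) := by
    simp only [le_antisymm_iff, ← not_lt, h p q hp hq, h q p hq hp]
  refine forall₄_congr fun p q hp hq => ?_
  rw [h p q (by omega) (by omega), eq_iff (by omega) (by omega)]

end SameOrderAt

section Standardization

variable {α : Type*} [LinearOrder α] {k : ℕ} {f : Fin k → α}

noncomputable def stdPerm (f : Fin k → α) : Equiv.Perm (Fin k) := (Tuple.sort f).symm

lemma strictMono_comp_sort_of_injective (hf : Function.Injective f) :
    StrictMono (f ∘ Tuple.sort f) :=
  (Tuple.monotone_sort f).strictMono_of_injective (hf.comp (Tuple.sort f).injective)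

lemma stdPerm_lt_stdPerm_iff (hf : Function.Injective f) {i j : Fin k} :
    stdPerm f i < stdPerm f j ↔ f i < f j := by
  conv_rhs => rw [← (Tuple.sort f).apply_symm_apply i, ← (Tuple.sort f).apply_symm_apply j]
  exact ((strictMono_comp_sort_of_injective hf).lt_iff_lt).symm

lemma orderEmbOfFin_comp_stdPerm (hf : Function.Injective f) {s : Finset α}
    (hs : (s : Set α) = Set.range f) (h : s.card = k) : s.orderEmbOfFin h ∘ stdPerm f = f := by
  have hsorted : f ∘ Tuple.sort f = s.orderEmbOfFin h :=
    Finset.orderEmbOfFin_unique h (fun x => by simp [← Finset.mem_coe, hs])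
      (strictMono_comp_sort_of_injective hf)
  rw [← hsorted]
  ext i
  simp [stdPerm]

lemma eq_of_range_eq_of_stdPerm_eq {g : Fin k → α} (hf : Function.Injective f)
    (hg : Function.Injective g) (hrange : Set.range f = Set.range g)
    (hstd : stdPerm f = stdPerm g) : f = g := by
  classical
  have hs : ((Finset.univ.image g : Finset α) : Set α) = Set.range g := by simp
  have hcard : (Finset.univ.image g).card = k := by
    rw [Finset.card_image_of_injective _ hg, Finset.card_univ, Fintype.card_fin]
  calc f = _ ∘ stdPerm f := (orderEmbOfFin_comp_stdPerm hf (hs.trans hrange.symm) hcard).symm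
    _ = _ ∘ stdPerm g := by rw [hstd]
    _ = g := orderEmbOfFin_comp_stdPerm hg hs hcard

end Standardization

lemma permWord_lt_permWord_iff {n : ℕ} (σ : Equiv.Perm (Fin n)) {p q : ℕ} (hp : p < n)
    (hq : q < n) : permWord σ p < permWord σ q ↔ σ ⟨p, hp⟩ < σ ⟨q, hq⟩ := by
  simp only [permWord, dif_pos hp, dif_pos hq, Fin.lt_def]

noncomputable def permProb {M : ℕ} (R : Equiv.Perm (Fin M) → Prop) : ℝ :=
  Nat.card {σ // R σ} / M.factorial

section Split

variable {A B : ℕ}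

noncomputable def blockDecomp (σ : Equiv.Perm (Fin (A + B))) :
    {S : Finset (Fin (A + B)) // S.card = A} × Equiv.Perm (Fin A) × Equiv.Perm (Fin B) :=
  ⟨⟨Finset.univ.image (σ ∘ Fin.castAdd B),
      by rw [Finset.card_image_of_injective _ (σ.injective.comp (Fin.castAdd_injective A B)),
        Finset.card_univ, Fintype.card_fin]⟩,
    stdPerm (σ ∘ Fin.castAdd B), stdPerm (σ ∘ Fin.natAdd A)⟩

lemma range_natAdd_eq_compl (σ : Equiv.Perm (Fin (A + B))) :
    Set.range (σ ∘ Fin.natAdd A) = (Set.range (σ ∘ Fin.castAdd B))ᶜ := by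
  ext x
  obtain ⟨y, rfl⟩ := σ.surjective x
  induction y using Fin.addCases <;> simp [Fin.ext_iff] <;> omega

lemma blockDecomp_injective : Function.Injective (blockDecomp (A := A) (B := B)) := by
  intro σ σ' h
  simp only [blockDecomp, Prod.mk.injEq, Subtype.mk.injEq] at h
  obtain ⟨himage, hleft, hright⟩ := h
  replace himage := congrArg (fun S : Finset (Fin (A + B)) => (S : Set (Fin (A + B)))) himage
  simp only [Finset.coe_image, Finset.coe_univ, Set.image_univ] at himage
  have hL : σ ∘ Fin.castAdd B = σ' ∘ Fin.castAdd B :=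
    eq_of_range_eq_of_stdPerm_eq (σ.injective.comp (Fin.castAdd_injective A B))
      (σ'.injective.comp (Fin.castAdd_injective A B)) himage hleft
  have hR : σ ∘ Fin.natAdd A = σ' ∘ Fin.natAdd A := by
    refine eq_of_range_eq_of_stdPerm_eq (σ.injective.comp (Fin.natAdd_injective B A))
      (σ'.injective.comp (Fin.natAdd_injective B A)) ?_ hright
    rw [range_natAdd_eq_compl, range_natAdd_eq_compl, himage]
  ext i
  induction i using Fin.addCases with
  | left i => exact congrArg Fin.val (congrFun hL i)
  | right i => exact congrArg Fin.val (congrFun hR i)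

lemma blockDecomp_bijective : Function.Bijective (blockDecomp (A := A) (B := B)) := by
  rw [Fintype.bijective_iff_injective_and_card]
  refine ⟨blockDecomp_injective, ?_⟩
  rw [Fintype.card_perm, Fintype.card_prod, Fintype.card_prod, Fintype.card_finset_len,
    Fintype.card_perm, Fintype.card_perm, Fintype.card_fin, Fintype.card_fin, Fintype.card_fin,
    ← Nat.choose_mul_factorial_mul_factorial (Nat.le_add_right A B), Nat.add_sub_cancel_left,
    Nat.mul_assoc]

lemma sameOrderAt_blockDecomp_left (σ : Equiv.Perm (Fin (A + B))) :
    SameOrderAt (permWord σ) 0 (permWord (blockDecomp σ).2.1) 0 A := by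
  intro p q hp hq
  simp only [Nat.zero_add]
  rw [permWord_lt_permWord_iff _ hp hq, permWord_lt_permWord_iff _ (by omega) (by omega),
    blockDecomp, stdPerm_lt_stdPerm_iff (σ.injective.comp (Fin.castAdd_injective A B))]
  rfl

lemma sameOrderAt_blockDecomp_right (σ : Equiv.Perm (Fin (A + B))) :
    SameOrderAt (permWord σ) A (permWord (blockDecomp σ).2.2) 0 B := by
  intro p q hp hq
  simp only [Nat.zero_add]
  rw [permWord_lt_permWord_iff _ hp hq, permWord_lt_permWord_iff _ (by omega) (by omega),
    blockDecomp, stdPerm_lt_stdPerm_iff (σ.injective.comp (Fin.natAdd_injective B A))]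
  rfl

theorem permProb_split {M : ℕ} (hM : A + B = M) {P : Equiv.Perm (Fin A) → Prop}
    {Q : Equiv.Perm (Fin B) → Prop} {R : Equiv.Perm (Fin M) → Prop}
    (hR : ∀ σ τ ρ, SameOrderAt (permWord σ) 0 (permWord τ) 0 A →
      SameOrderAt (permWord σ) A (permWord ρ) 0 B → (R σ ↔ P τ ∧ Q ρ)) :
    permProb R = permProb P * permProb Q := by
  subst hM
  have hcard : Nat.card {σ // R σ} =
      (A + B).choose A * (Nat.card {τ // P τ} * Nat.card {ρ // Q ρ}) := by
    calc Nat.card {σ // R σ}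
        = Nat.card {x : {S : Finset (Fin (A + B)) // S.card = A} × _ //
            True ∧ (P x.2.1 ∧ Q x.2.2)} :=
          Nat.card_congr <| (Equiv.ofBijective _ blockDecomp_bijective).subtypeEquiv fun σ => by
            simpa using
              hR σ _ _ (sameOrderAt_blockDecomp_left σ) (sameOrderAt_blockDecomp_right σ)
      _ = _ := by
        rw [Nat.card_congr (Equiv.subtypeProdEquivProd (p := fun _ => True)
            (q := fun y : Equiv.Perm (Fin A) × Equiv.Perm (Fin B) => P y.1 ∧ Q y.2)),
          Nat.card_prod, Nat.card_congr Equiv.subtypeProdEquivProd, Nat.card_prod,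
          Nat.card_congr (Equiv.subtypeUnivEquiv fun _ => trivial), Nat.card_eq_fintype_card,
          Fintype.card_finset_len, Fintype.card_fin]
  have hfact := Nat.choose_mul_factorial_mul_factorial (Nat.le_add_right A B)
  rw [Nat.add_sub_cancel_left] at hfact
  have hchoose : ((A + B).choose A : ℝ) ≠ 0 := by
    exact_mod_cast (Nat.choose_pos (Nat.le_add_right A B)).ne'
  rw [permProb, permProb, permProb, hcard, ← hfact]
  push_cast
  field_simp

end Split

section Events

variable {α β : Type*} [LinearOrder α] [LinearOrder β] {d : ℕ} {v : ℕ → ℕ} {w : ℕ → α}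
  {w' : ℕ → β}

def AvoidsBefore (d : ℕ) (v : ℕ → ℕ) (w : ℕ → α) (k : ℕ) : Prop :=
  ∀ i < k, ¬ consecOcc d v w i

/-- Consecutive occurrences overlapping in one entry: the event `B_1 ∩ B_d ∩ ⋯ ∩ B_{j(d-1)+1}` of
`L_j`, shifted by `c`. -/
def ChainFrom (d : ℕ) (v : ℕ → ℕ) (w : ℕ → α) (c j : ℕ) : Prop :=
  ∀ t ≤ j, consecOcc d v w (c + t * (d - 1))

lemma chainFrom_zero_iff {c : ℕ} : ChainFrom d v w c 0 ↔ consecOcc d v w c := by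
  simp [ChainFrom]

lemma chainFrom_succ_iff {c j : ℕ} :
    ChainFrom d v w c (j + 1) ↔ consecOcc d v w c ∧ ChainFrom d v w (c + (d - 1)) j := by
  constructor
  · intro h
    refine ⟨by simpa using h 0 (Nat.zero_le _), fun t ht => ?_⟩
    simpa [Nat.add_assoc, Nat.succ_mul, Nat.add_comm (d - 1)] using h (t + 1) (by omega)
  · rintro ⟨h0, h⟩ t ht
    rcases t with _ | t
    · simpa using h0
    · simpa [Nat.add_assoc, Nat.succ_mul, Nat.add_comm (d - 1)] using h t (by omega)

lemma conCount_eq_zero_iff (hd : 0 < d) (k : ℕ) :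
    conCount d (k + d - 1) v w = 0 ↔ AvoidsBefore d v w k := by
  rw [conCount, Finset.card_eq_zero, Finset.filter_eq_empty_iff]
  constructor
  · intro h i hi hocc
    exact h (Finset.mem_range.2 (by omega)) ⟨by omega, hocc⟩
  · intro h i hi hocc
    exact h i (by rw [Finset.mem_range] at hi; omega) hocc.2

lemma SameOrderAt.avoidsBefore_iff {A k : ℕ} (h : SameOrderAt w 0 w' 0 A) (hk : k + d ≤ A + 1) :
    AvoidsBefore d v w k ↔ AvoidsBefore d v w' k := by
  refine forall₂_congr fun i hi => not_congr ?_
  simpa using (h.shift (r := i) (l := d) (by omega)).consecOcc_iff le_rfl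

lemma mul_sub_one_add_le_add_one_mul_sub {t j : ℕ} (ht : t ≤ j) :
    t * (d - 1) + d ≤ (j + 1) * d - j := by
  rcases d with _ | e
  · simp
  · have : t * e ≤ j * e := Nat.mul_le_mul_right e ht
    simp only [Nat.add_sub_cancel]
    rw [Nat.add_mul, Nat.mul_add]
    omega

lemma SameOrderAt.chainFrom_iff {c c' j : ℕ} (h : SameOrderAt w c w' c' ((j + 1) * d - j)) :
    ChainFrom d v w c j ↔ ChainFrom d v w' c' j :=
  forall₂_congr fun _ ht =>
    (h.shift (mul_sub_one_add_le_add_one_mul_sub ht)).consecOcc_iff le_rfl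

lemma not_consecOcc_of_lt_of_lt (hno : ∀ l, inOverlap d v l → l = 1) {i i' : ℕ} (h : i < i')
    (h' : i' + 1 < i + d) (ho' : consecOcc d v w i') : ¬ consecOcc d v w i := by
  intro ho
  suffices inOverlap d v (i + d - i') by have := hno _ this; omega
  refine ⟨by omega, by omega, fun p q hp hq => ?_⟩
  have e := (ho (d - (i + d - i') + p) (d - (i + d - i') + q) (by omega) (by omega)).1
  rw [show i + (d - (i + d - i') + p) = i' + p by omega,
    show i + (d - (i + d - i') + q) = i' + q by omega] at e
  exact (ho' p q (by omega) (by omega)).1.symm.trans e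

end Events

section PermProb

variable {M : ℕ} {R R' : Equiv.Perm (Fin M) → Prop}

lemma permProb_congr (h : ∀ σ, R σ ↔ R' σ) : permProb R = permProb R' := by
  rw [permProb, permProb, Nat.card_congr (Equiv.subtypeEquivRight h)]

lemma permProb_of_forall (h : ∀ σ, R σ) : permProb R = 1 := by
  rw [permProb, Nat.card_congr (Equiv.subtypeUnivEquiv h), Nat.card_perm, Nat.card_eq_fintype_card,
    Fintype.card_fin, div_self (by positivity)]

lemma permProb_eq_add (Q : Equiv.Perm (Fin M) → Prop) :
    permProb R = permProb (fun σ => R σ ∧ Q σ) + permProb (fun σ => R σ ∧ ¬ Q σ) := by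
  simp only [permProb, Nat.card_eq_fintype_card, Fintype.card_subtype, ← add_div]
  rw [← Nat.cast_add, ← Finset.card_filter_add_card_filter_not (s := Finset.univ.filter R) Q,
    Finset.filter_filter, Finset.filter_filter]

end PermProb

section PatternProbabilities

variable {d : ℕ} {v : ℕ → ℕ}

/-- `a_k^{(1)}(v)`. -/
noncomputable def avoidProb (d : ℕ) (v : ℕ → ℕ) (k : ℕ) : ℝ :=
  permProb (M := k + d - 1) fun σ => AvoidsBefore d v (permWord σ) k

/-- `L_j(v)`. -/
noncomputable def chainProb (d : ℕ) (v : ℕ → ℕ) (j : ℕ) : ℝ :=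
  permProb (M := (j + 1) * d - j) fun σ => ChainFrom d v (permWord σ) 0 j

/-- `F(c, j)`: the chain of occurrences ends exactly at the end of the permutation. -/
noncomputable def avoidThenChainProb (d : ℕ) (v : ℕ → ℕ) (c j : ℕ) : ℝ :=
  permProb (M := c + ((j + 1) * d - j)) fun σ =>
    AvoidsBefore d v (permWord σ) c ∧ ChainFrom d v (permWord σ) c j

lemma avoidProb_zero : avoidProb d v 0 = 1 :=
  permProb_of_forall fun _ _ hi => absurd hi (Nat.not_lt_zero _)

lemma avoidThenChainProb_eq_permProb {c j M : ℕ} (hM : c + ((j + 1) * d - j) = M) :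
    avoidThenChainProb d v c j = permProb (M := M) fun σ =>
      AvoidsBefore d v (permWord σ) c ∧ ChainFrom d v (permWord σ) c j := by
  subst hM; rfl

lemma avoidProb_eq_permProb {k M : ℕ} (hk : k + d - 1 ≤ M) :
    avoidProb d v k = permProb (M := M) fun σ => AvoidsBefore d v (permWord σ) k := by
  rw [permProb_split (A := k + d - 1) (B := M - (k + d - 1)) (by omega)
    (P := fun σ => AvoidsBefore d v (permWord σ) k) (Q := fun _ => True)
    fun σ τ _ hτ _ => by simpa using hτ.avoidsBefore_iff (by omega),
    permProb_of_forall fun _ => trivial, mul_one, avoidProb]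

lemma avoidProb_eq_avoidThenChainProb_add (k : ℕ) :
    avoidProb d v k = avoidThenChainProb d v k 0 + avoidProb d v (k + 1) := by
  rw [avoidProb_eq_permProb (M := k + ((0 + 1) * d - 0)) (by omega),
    avoidProb_eq_permProb (k := k + 1) (M := k + ((0 + 1) * d - 0)) (by omega),
    permProb_eq_add fun σ => consecOcc d v (permWord σ) k, avoidThenChainProb]
  congr 1
  · exact permProb_congr fun σ => and_congr_right' chainFrom_zero_iff.symm
  · refine permProb_congr fun σ =>
      ⟨fun ⟨h, hk⟩ i hi => ?_, fun h => ⟨fun i hi => h i (by omega), h k (by omega)⟩⟩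
    rcases Nat.lt_succ_iff_lt_or_eq.1 hi with hi | rfl
    exacts [h i hi, hk]

lemma chain_length_succ (hd : 0 < d) (j : ℕ) :
    (j + 1 + 1) * d - (j + 1) = d - 1 + ((j + 1) * d - j) := by
  have := Nat.le_mul_of_pos_right (j + 1) hd
  rw [Nat.succ_mul]
  omega

lemma avoidThenChainProb_add (hno : ∀ l, inOverlap d v l → l = 1) (hd : 1 < d) (c j : ℕ) :
    avoidThenChainProb d v (c + (d - 1)) j + avoidThenChainProb d v c (j + 1) =
      avoidProb d v c * chainProb d v j := by
  set M := c + (d - 1) + ((j + 1) * d - j)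
  set R : Equiv.Perm (Fin M) → Prop := fun σ =>
    AvoidsBefore d v (permWord σ) c ∧ ChainFrom d v (permWord σ) (c + (d - 1)) j
  have hsplit : permProb R = avoidProb d v c * chainProb d v j := by
    refine permProb_split (by omega) fun σ τ ρ hτ hρ =>
      and_congr (hτ.avoidsBefore_iff (by omega)) ?_
    rw [show c + d - 1 = c + (d - 1) by omega] at hρ
    exact hρ.chainFrom_iff
  rw [← hsplit, permProb_eq_add (R := R) fun σ => consecOcc d v (permWord σ) c, add_comm,
    avoidThenChainProb_eq_permProb (c := c) (j := j + 1) (M := M)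
      (by rw [chain_length_succ hd.le, ← Nat.add_assoc]), avoidThenChainProb]
  congr 1
  · exact permProb_congr fun σ => by rw [chainFrom_succ_iff]; tauto
  · refine permProb_congr fun σ => ⟨fun ⟨h, hchain⟩ =>
      ⟨⟨fun i hi => h i (by omega), hchain⟩, h c (by omega)⟩, fun ⟨⟨h, hchain⟩, hc⟩ =>
      ⟨fun i hi => ?_, hchain⟩⟩
    rcases lt_trichotomy i c with hi' | rfl | hi'
    · exact h i hi'
    · exact hc
    · exact not_consecOcc_of_lt_of_lt hno hi (by omega) (by simpa using hchain 0 (Nat.zero_le _))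

lemma avoidThenChainProb_of_lt (hno : ∀ l, inOverlap d v l → l = 1) {c : ℕ} (hc : c + 1 < d)
    (j : ℕ) : avoidThenChainProb d v c j = chainProb d v j := by
  rw [avoidThenChainProb, permProb_split (A := c) rfl (P := fun _ => True)
      fun σ τ ρ _ hρ => ?_, permProb_of_forall fun _ => trivial, one_mul, chainProb]
  rw [true_and, ← hρ.chainFrom_iff, and_iff_right_iff_imp]
  exact fun hchain i hi => not_consecOcc_of_lt_of_lt hno hi (by omega)
    (by simpa using hchain 0 (Nat.zero_le _))

theorem avoidThenChainProb_eq_sum (hno : ∀ l, inOverlap d v l → l = 1) (hd : 1 < d) (c j : ℕ) :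
    avoidThenChainProb d v c j = ∑ t ∈ Finset.range (c / (d - 1) + 1),
      (-1) ^ t * chainProb d v (j + t) * avoidProb d v (c - (t + 1) * (d - 1)) := by
  induction c using Nat.strong_induction_on generalizing j with
  | _ c ih =>
  by_cases hc : c + 1 < d
  · rw [Nat.div_eq_of_lt (by omega), Finset.sum_range_one, avoidThenChainProb_of_lt hno hc,
      Nat.sub_eq_zero_of_le (by omega), avoidProb_zero]
    simp
  obtain ⟨c, rfl⟩ : ∃ c', c = c' + (d - 1) := ⟨c - (d - 1), by omega⟩
  have hterm (t : ℕ) :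
      (-1) ^ (t + 1) * chainProb d v (j + (t + 1)) *
          avoidProb d v (c + (d - 1) - (t + 1 + 1) * (d - 1)) =
        -((-1) ^ t * chainProb d v (j + 1 + t) * avoidProb d v (c - (t + 1) * (d - 1))) := by
    rw [Nat.succ_mul (t + 1), Nat.add_sub_add_right, show j + (t + 1) = j + 1 + t by omega]
    ring
  rw [eq_sub_of_add_eq (avoidThenChainProb_add hno hd c j), Nat.add_div_right _ (by omega),
    Finset.sum_range_succ', ih c (by omega)]
  simp only [hterm, Finset.sum_neg_distrib, pow_zero, one_mul, zero_add, add_zero,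
    Nat.add_sub_cancel]
  ring

theorem avoidProb_sub_avoidProb_succ (hno : ∀ l, inOverlap d v l → l = 1) (hd : 1 < d) (k : ℕ) :
    avoidProb d v k - avoidProb d v (k + 1) = ∑ t ∈ Finset.range (k / (d - 1) + 1),
      (-1) ^ t * chainProb d v t * avoidProb d v (k - (t + 1) * (d - 1)) := by
  rw [← eq_sub_of_add_eq (avoidProb_eq_avoidThenChainProb_add k).symm,
    avoidThenChainProb_eq_sum hno hd]
  simp only [Nat.zero_add]

end PatternProbabilities

lemma consecOcc_permWord_zero_iff {d : ℕ} {v σ : Equiv.Perm (Fin d)} :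
    consecOcc d (permWord v) (permWord σ) 0 ↔ σ = v := by
  refine ⟨fun h => ?_, fun h p q _ _ => by simp [h]⟩
  have hlt (p q : Fin d) : σ p < σ q ↔ v p < v q := by
    have := (h p q p.2 q.2).1
    rwa [Nat.zero_add, Nat.zero_add, permWord_lt_permWord_iff _ p.2 q.2,
      permWord_lt_permWord_iff _ p.2 q.2] at this
  have hmono : Monotone (σ * v⁻¹) := fun x y hxy => by
    rw [Equiv.Perm.mul_apply, Equiv.Perm.mul_apply, ← not_lt, hlt]
    simpa using hxy
  rw [Equiv.Perm.monotone_iff, mul_inv_eq_one] at hmono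
  exact hmono

lemma chainProb_zero {d : ℕ} (v : Equiv.Perm (Fin d)) :
    chainProb d (permWord v) 0 = 1 / d.factorial := by
  rw [chainProb]
  generalize hM : (0 + 1) * d - 0 = M
  obtain rfl : M = d := by simpa using hM.symm
  rw [permProb_congr fun σ => chainFrom_zero_iff.trans consecOcc_permWord_zero_iff, permProb,
    Nat.card_unique, Nat.cast_one]

lemma gPerm_div_factorial_eq_avoidProb {d : ℕ} {v : ℕ → ℕ} (hd : 0 < d) (k : ℕ) :
    (gPerm d v (k + d - 1) 0 : ℝ) / (k + d - 1).factorial = avoidProb d v k := by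
  rw [gPerm, avoidProb, permProb,
    Nat.card_congr (Equiv.subtypeEquivRight fun σ => conCount_eq_zero_iff hd k)]

lemma toNat_sub_mul_add_sub {d : ℕ} (hd : 0 < d) (n j : ℕ) :
    ((n : ℤ) - j * d + j - d).toNat = n - 1 - (j + 1) * (d - 1) := by
  obtain ⟨e, rfl⟩ : ∃ e, d = e + 1 := ⟨d - 1, by omega⟩
  rw [show (n : ℤ) - j * ((e + 1 : ℕ) : ℤ) + j - ((e + 1 : ℕ) : ℤ) = n - 1 - ((j + 1) * e : ℕ) by
    push_cast; ring, Nat.add_sub_cancel]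
  generalize (j + 1) * e = x
  omega

theorem nonoverlapping_linear_recursion_general (d : ℕ) (v : Equiv.Perm (Fin d))
    (hno : ∀ i, inOverlap d (permWord v) i ↔ i = 1)
    (a : ℤ → ℝ)
    (ha : ∀ z : ℤ, a z = if z ≤ 0 then 1 else
      (gPerm d (permWord v) (z.toNat + d - 1) 0 : ℝ) / (Nat.factorial (z.toNat + d - 1)))
    (L : ℕ → ℝ)
    (hL : ∀ j : ℕ, L j =
      (Nat.card {σ : Equiv.Perm (Fin ((j + 1) * d - j)) //
          ∀ s : ℕ, s ≤ j → consecOcc d (permWord v) (permWord σ) (s * (d - 1))} : ℝ) /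
        (Nat.factorial ((j + 1) * d - j)))
    (n : ℕ) (hn : d ≤ n) :
    a n - a ((n : ℤ) - 1) + (1 / (Nat.factorial d : ℝ)) * a ((n : ℤ) - d) +
      ∑ j ∈ Finset.Icc 1 ((n - 1) / (d - 1)),
        (-1 : ℝ) ^ j * L j * a ((n : ℤ) - j * d + j - d) = 0 := by
  have hd : 1 < d := ((hno 1).2 rfl).2.1
  have ha' (z : ℤ) : a z = avoidProb d (permWord v) z.toNat := by
    rw [ha]
    split_ifs with hz
    · rw [Int.toNat_of_nonpos hz, avoidProb_zero]
    · exact gPerm_div_factorial_eq_avoidProb (by omega) _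
  have hL' (j : ℕ) : L j = chainProb d (permWord v) j := by
    rw [hL, chainProb, permProb]
    simp [ChainFrom]
  obtain ⟨k, rfl⟩ : ∃ k, n = k + 1 := ⟨n - 1, by omega⟩
  have key := avoidProb_sub_avoidProb_succ (fun l => (hno l).1) hd k
  rw [Finset.sum_range_succ', chainProb_zero] at key
  rw [← Finset.Ico_add_one_right_eq_Icc, Finset.sum_Ico_eq_sum_range]
  simp only [ha', hL', toNat_sub_mul_add_sub (by omega : 0 < d)]
  rw [show ((k + 1 : ℕ) : ℤ).toNat = k + 1 by omega,
    show ((k + 1 : ℕ) - 1 : ℤ).toNat = k by omega,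
    show ((k + 1 : ℕ) - d : ℤ).toNat = k - (0 + 1) * (d - 1) by omega]
  simp only [Nat.add_sub_cancel, Nat.add_comm 1, zero_add, pow_zero, one_mul] at key ⊢
  linarith

/-- Linear recursion for the avoidance probabilities `a_n^{(1)}(v)` of a non-overlapping
pattern `v ∈ S_d`, where `L_j(v)` is the probability that a uniform random permutation of
length `(j+1)d - j` has consecutive occurrences of `v` starting at (1-indexed) positions
`1, d, 2d-1, …, j(d-1)+1`, and `a` is extended by `1` to non-positive indices. -/
theorem nonoverlapping_linear_recursion (d : ℕ) (hd : 3 ≤ d) (v : Equiv.Perm (Fin d))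
    (hno : ∀ i, inOverlap d (permWord v) i ↔ i = 1)
    (a : ℤ → ℝ)
    (ha : ∀ z : ℤ, a z = if z ≤ 0 then 1 else
      (gPerm d (permWord v) (z.toNat + d - 1) 0 : ℝ) / (Nat.factorial (z.toNat + d - 1)))
    (L : ℕ → ℝ)
    (hL : ∀ j : ℕ, L j =
      (Nat.card {σ : Equiv.Perm (Fin ((j + 1) * d - j)) //
          ∀ s : ℕ, s ≤ j → consecOcc d (permWord v) (permWord σ) (s * (d - 1))} : ℝ) /
        (Nat.factorial ((j + 1) * d - j)))
    (n : ℕ) (hn : d ≤ n) :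
    a n - a ((n : ℤ) - 1) + (1 / (Nat.factorial d : ℝ)) * a ((n : ℤ) - d) +
      ∑ j ∈ Finset.Icc 1 ((n - 1) / (d - 1)),
        (-1 : ℝ) ^ j * L j * a ((n : ℤ) - j * d + j - d) = 0 :=
  nonoverlapping_linear_recursion_general d v hno a ha L hL n hn
end

section
/- Let v, w ∈ S_d be non-overlapping patterns that are c-Wilf-equivalent in permutations (g_0^v(S_n) = g_0^w(S_n) for all n). Then they are strongly c-Wilf-equivalent in permutations: g_r^v(S_n) = g_r^w(S_n) for all n ∈ ℕ and all r ∈ ℕ₀. -/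
open Finset MeasureTheory Polynomial

attribute [local instance] Classical.propDecidable

/-! The argument is the cluster method. Write `numMarked T` for the number of permutations with an
occurrence at every position of `T`; by Möbius inversion over sets of positions, the numbers
`g_r` are determined by the `numMarked T`. Two occurrences of a non-overlapping pattern share at
most one entry, so `numMarked T` vanishes unless the positions of `T` are at least `d - 1` apart.
Such a `T` is a union of maximal chains of positions exactly `d - 1` apart, and cutting a
permutation just after the first chain writes `numMarked T` as a product of binomial
coefficients, factorials and cluster numbers `clusterNum m` (chains of length `m` covering a
permutation of length `m (d - 1) + 1`). Finally, inclusion–exclusion for `g_0` at length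
`m (d - 1) + 1` involves `clusterNum m` only through the full chain, every other term being
determined by shorter chains; so `g_0^v = g_0^w` forces the cluster numbers of `v` and `w` to
agree, by induction on `m`. -/

section Occurrences

variable {α β : Type*} [LinearOrder α] [LinearOrder β]

theorem consecOcc_congr {d : ℕ} {u : ℕ → ℕ} {w : ℕ → α} {w' : ℕ → β} {i t : ℕ}
    (h : ∀ p q, p < d → q < d → (w (i + p) < w (i + q) ↔ w' (t + p) < w' (t + q))) :
    consecOcc d u w i ↔ consecOcc d u w' t := by
  have heq : ∀ p q, p < d → q < d → (w (i + p) = w (i + q) ↔ w' (t + p) = w' (t + q)) :=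
    fun p q hp hq => by simp only [le_antisymm_iff, ← not_lt, h p q hp hq, h q p hq hp]
  exact forall₄_congr fun p q hp hq => by rw [h p q hp hq, heq p q hp hq]

theorem consecOcc_permWord_iff_of_strictMono {d N M : ℕ} {u : ℕ → ℕ} (σ : Equiv.Perm (Fin N))
    (ρ : Equiv.Perm (Fin M)) {f : Fin M → Fin N} (hf : StrictMono f) {i t : ℕ}
    (hi : i + d ≤ N) (ht : t + d ≤ M)
    (h : ∀ p (hp : p < d), σ ⟨i + p, by omega⟩ = f (ρ ⟨t + p, by omega⟩)) :
    consecOcc d u (permWord σ) i ↔ consecOcc d u (permWord ρ) t := by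
  refine consecOcc_congr fun p q hp hq => ?_
  simp only [permWord, dif_pos (show i + p < N by omega), dif_pos (show i + q < N by omega),
    dif_pos (show t + p < M by omega), dif_pos (show t + q < M by omega), h p hp, h q hq,
    Fin.val_fin_lt, hf.lt_iff_lt]

/-- The common part of the windows at `i < j` witnesses `d - (j - i) ∈ O_u`, and
`d - (j - i) ≠ 1` because the windows share at least two positions. -/
theorem not_consecOcc_of_lt_of_lt_s11 {d : ℕ} {u : ℕ → ℕ} (hu : ∀ i, inOverlap d u i → i = 1)
    {w : ℕ → α} {i j : ℕ} (hij : i < j) (hji : j + 2 ≤ i + d) (hi : consecOcc d u w i) :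
    ¬ consecOcc d u w j := by
  intro hj
  have hover : inOverlap d u (d - (j - i)) := by
    refine ⟨by omega, by omega, fun p q hp hq => ?_⟩
    have e : d - (d - (j - i)) = j - i := by omega
    rw [e, ← (hj p q (by omega) (by omega)).1]
    have := (hi (j - i + p) (j - i + q) (by omega) (by omega)).1
    rwa [show i + (j - i + p) = j + p by omega, show i + (j - i + q) = j + q by omega] at this
  have := hu _ hover
  omega

end Occurrences

section Inversion

variable {α β : Type*}

theorem sum_powerset_filter_superset_neg_one_pow (U V : Finset β) :
    ∑ T ∈ V.powerset with U ⊆ T, (-1 : ℤ) ^ #(T \ U) = if V = U then 1 else 0 := by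
  by_cases hUV : U ⊆ V
  · have hbij : ∑ T ∈ V.powerset with U ⊆ T, (-1 : ℤ) ^ #(T \ U) =
        ∑ X ∈ (V \ U).powerset, (-1 : ℤ) ^ #X := by
      refine Finset.sum_nbij' (· \ U) (· ∪ U) ?_ ?_ ?_ ?_ (fun _ _ => rfl)
      · intro T hT
        simp only [mem_filter, mem_powerset] at hT ⊢
        exact sdiff_subset_sdiff hT.1 le_rfl
      · intro X hX
        simp only [mem_filter, mem_powerset] at hX ⊢
        exact ⟨union_subset (hX.trans sdiff_subset) hUV, subset_union_right⟩
      · intro T hT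
        simp only [mem_filter, mem_powerset] at hT
        exact sdiff_union_of_subset hT.2
      · intro X hX
        simp only [mem_powerset] at hX
        exact union_sdiff_cancel_right (disjoint_of_subset_left hX disjoint_sdiff_self_left)
    simp only [hbij, sum_powerset_neg_one_pow_card, sdiff_eq_empty_iff_subset]
    exact if_congr ⟨fun h => h.antisymm hUV, fun h => h.le⟩ rfl rfl
  · rw [if_neg (fun h => hUV h.ge), sum_eq_zero]
    intro T hT
    simp only [mem_filter, mem_powerset] at hT
    exact absurd (hT.2.trans hT.1) hUV

/-- Möbius inversion on the Boolean lattice. -/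
theorem card_filter_eq_eq_sum_neg_one_pow [Fintype α] (f : α → Finset β) {s : Finset β}
    (hf : ∀ a, f a ⊆ s) (U : Finset β) :
    (#{a | f a = U} : ℤ) = ∑ T ∈ s.powerset with U ⊆ T, (-1) ^ #(T \ U) * (#{a | T ⊆ f a} : ℤ) := by
  calc (#{a | f a = U} : ℤ)
      = ∑ a, ∑ T ∈ (f a).powerset with U ⊆ T, (-1 : ℤ) ^ #(T \ U) := by
        simp only [sum_powerset_filter_superset_neg_one_pow, sum_boole]
    _ = ∑ a, ∑ T ∈ s.powerset with U ⊆ T, if T ⊆ f a then (-1 : ℤ) ^ #(T \ U) else 0 := by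
        refine sum_congr rfl fun a _ => ?_
        rw [← sum_filter, filter_filter]
        refine sum_congr ?_ fun _ _ => rfl
        ext T
        simp only [mem_filter, mem_powerset]
        exact ⟨fun ⟨h1, h2⟩ => ⟨h1.trans (hf a), h2, h1⟩, fun ⟨_, h2, h1⟩ => ⟨h1, h2⟩⟩
    _ = ∑ T ∈ s.powerset with U ⊆ T, (-1) ^ #(T \ U) * (#{a | T ⊆ f a} : ℤ) := by
        rw [sum_comm]
        refine sum_congr rfl fun T _ => ?_
        rw [← sum_filter, sum_const, nsmul_eq_mul, mul_comm]

theorem card_filter_eq_sum_card_filter_eq [Fintype α] (f : α → Finset β) {s : Finset β}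
    (hf : ∀ a, f a ⊆ s) (P : Finset β → Prop) :
    #{a | P (f a)} = ∑ U ∈ s.powerset with P U, #{a | f a = U} := by
  rw [card_eq_sum_card_fiberwise (f := f) (t := {U ∈ s.powerset | P U})]
  · refine sum_congr rfl fun U hU => ?_
    congr 1
    ext a
    simp only [mem_filter, mem_univ, true_and] at hU ⊢
    exact ⟨fun h => h.2, fun h => ⟨h ▸ hU.2, h⟩⟩
  · intro a ha
    simp only [coe_filter, mem_univ, true_and, Set.mem_ofPred_eq, mem_powerset] at ha ⊢
    exact ⟨hf a, ha⟩

end Inversion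

section Glue

variable {n c : ℕ} (hc : c ≤ n)

def prefixSuffixEquiv : Fin c ⊕ Fin (n - c) ≃ Fin n :=
  finSumFinEquiv.trans (finCongr (Nat.add_sub_cancel' hc))

theorem card_compl_eq_sub {A : Finset (Fin n)} (hA : #A = c) : #Aᶜ = n - c := by
  rw [card_compl, hA, Fintype.card_fin]

noncomputable def valueSplitEquiv (A : Finset (Fin n)) (hA : #A = c) :
    Fin c ⊕ Fin (n - c) ≃ Fin n :=
  Equiv.ofBijective (Sum.elim (A.orderEmbOfFin hA) (Aᶜ.orderEmbOfFin (card_compl_eq_sub hA))) <| by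
    refine ⟨(A.orderEmbOfFin hA).injective.sumElim (Aᶜ.orderEmbOfFin _).injective
      fun p q h => mem_compl.mp (Aᶜ.orderEmbOfFin_mem _ q) (h ▸ A.orderEmbOfFin_mem hA p), ?_⟩
    intro z
    by_cases hz : z ∈ A
    · obtain ⟨p, hp⟩ : z ∈ Set.range (A.orderEmbOfFin hA) := by rwa [range_orderEmbOfFin]
      exact ⟨.inl p, hp⟩
    · obtain ⟨q, hq⟩ : z ∈ Set.range (Aᶜ.orderEmbOfFin (card_compl_eq_sub hA)) := by
        rw [range_orderEmbOfFin, coe_compl]; exact hz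
      exact ⟨.inr q, hq⟩

theorem valueSplitEquiv_inl (A : Finset (Fin n)) (hA : #A = c) (p : Fin c) :
    valueSplitEquiv A hA (.inl p) = A.orderEmbOfFin hA p := rfl

/-- The permutation of `Fin n` whose values on the first `c` positions form the set `A`, in the
relative order `π`, and whose remaining values are in the relative order `τ`. -/
noncomputable def glue (A : {A : Finset (Fin n) // #A = c}) (π : Equiv.Perm (Fin c))
    (τ : Equiv.Perm (Fin (n - c))) : Equiv.Perm (Fin n) :=
  (prefixSuffixEquiv hc).symm.trans ((Equiv.sumCongr π τ).trans (valueSplitEquiv A.1 A.2))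

theorem glue_apply_prefixSuffixEquiv (A : {A : Finset (Fin n) // #A = c})
    (π : Equiv.Perm (Fin c)) (τ : Equiv.Perm (Fin (n - c))) (x : Fin c ⊕ Fin (n - c)) :
    glue hc A π τ (prefixSuffixEquiv hc x) = valueSplitEquiv A.1 A.2 (Sum.map π τ x) := by
  simp [glue]

theorem glue_bijective :
    Function.Bijective fun x : {A : Finset (Fin n) // #A = c} × Equiv.Perm (Fin c) ×
      Equiv.Perm (Fin (n - c)) => glue hc x.1 x.2.1 x.2.2 := by
  rw [Fintype.bijective_iff_injective_and_card]
  refine ⟨?_, ?_⟩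
  · rintro ⟨A, π, τ⟩ ⟨A', π', τ'⟩ heq
    have happ : ∀ x, valueSplitEquiv A.1 A.2 (Sum.map π τ x) =
        valueSplitEquiv A'.1 A'.2 (Sum.map π' τ' x) := fun x => by
      simpa only [glue_apply_prefixSuffixEquiv] using congrArg (· (prefixSuffixEquiv hc x)) heq
    have hrange : ∀ (A : {A : Finset (Fin n) // #A = c}) (π : Equiv.Perm (Fin c))
        (τ : Equiv.Perm (Fin (n - c))),
        (A.1 : Set (Fin n)) = Set.range fun p => valueSplitEquiv A.1 A.2 (Sum.map π τ (.inl p)) :=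
      fun A π τ => by
        simp only [Sum.map_inl, valueSplitEquiv_inl]
        exact ((π.surjective.range_comp _).trans (range_orderEmbOfFin _ _)).symm
    obtain rfl : A = A' := Subtype.ext <| coe_injective <| by
      rw [hrange A π τ, hrange A' π' τ']; simp only [happ]
    have hsum := fun x => (valueSplitEquiv A.1 A.2).injective (happ x)
    obtain rfl : π = π' := Equiv.ext fun p => Sum.inl_injective (hsum (.inl p))
    obtain rfl : τ = τ' := Equiv.ext fun q => Sum.inr_injective (hsum (.inr q))
    rfl
  · simp only [Fintype.card_prod, Fintype.card_finset_len, Fintype.card_perm, Fintype.card_fin]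
    rw [← Nat.choose_mul_factorial_mul_factorial hc, mul_assoc]

theorem card_filter_perm_eq_choose_mul (R : Equiv.Perm (Fin n) → Prop)
    (P : Equiv.Perm (Fin c) → Prop) (Q : Equiv.Perm (Fin (n - c)) → Prop)
    (hR : ∀ A π τ, R (glue hc A π τ) ↔ P π ∧ Q τ) :
    #{σ | R σ} = n.choose c * #{π | P π} * #{τ | Q τ} := by
  calc #{σ | R σ}
      = #{x : {A : Finset (Fin n) // #A = c} × Equiv.Perm (Fin c) × Equiv.Perm (Fin (n - c)) |
          P x.2.1 ∧ Q x.2.2} := by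
        rw [← Fintype.card_subtype, ← Fintype.card_subtype]
        exact Fintype.card_congr ((Equiv.ofBijective _ (glue_bijective hc)).subtypeEquiv
          fun x => (hR x.1 x.2.1 x.2.2).symm).symm
    _ = n.choose c * #{π | P π} * #{τ | Q τ} := by
        have hprod : ({x : {A : Finset (Fin n) // #A = c} × Equiv.Perm (Fin c) ×
            Equiv.Perm (Fin (n - c)) | P x.2.1 ∧ Q x.2.2} : Finset _) =
            univ ×ˢ (({π | P π} : Finset _) ×ˢ ({τ | Q τ} : Finset _)) := by
          ext; simp
        rw [hprod, card_product, card_product, card_univ, Fintype.card_finset_len,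
          Fintype.card_fin, mul_assoc]

theorem glue_apply_left (A : {A : Finset (Fin n) // #A = c}) (π : Equiv.Perm (Fin c))
    (τ : Equiv.Perm (Fin (n - c))) (p : ℕ) (hp : p < c) :
    glue hc A π τ ⟨p, by omega⟩ = A.1.orderEmbOfFin A.2 (π ⟨p, hp⟩) :=
  glue_apply_prefixSuffixEquiv hc A π τ (.inl ⟨p, hp⟩)

theorem glue_apply_right (A : {A : Finset (Fin n) // #A = c}) (π : Equiv.Perm (Fin c))
    (τ : Equiv.Perm (Fin (n - c))) (p : ℕ) (hp : p < n - c) :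
    glue hc A π τ ⟨c + p, by omega⟩ = (A.1)ᶜ.orderEmbOfFin (card_compl_eq_sub A.2) (τ ⟨p, hp⟩) :=
  glue_apply_prefixSuffixEquiv hc A π τ (.inr ⟨p, hp⟩)

end Glue

section Marked

variable (d : ℕ) (u : ℕ → ℕ)

noncomputable def occSet {n : ℕ} (σ : Equiv.Perm (Fin n)) : Finset ℕ :=
  {i ∈ range n | i + d ≤ n ∧ consecOcc d u (permWord σ) i}

/-- Counts, in the language of the cluster method, the permutations in which the occurrences at
the positions of `T` can be marked. -/
noncomputable def numMarked (n : ℕ) (T : Finset ℕ) : ℕ :=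
  #{σ : Equiv.Perm (Fin n) | T ⊆ occSet d u σ}

noncomputable def numExact (n : ℕ) (U : Finset ℕ) : ℕ :=
  #{σ : Equiv.Perm (Fin n) | occSet d u σ = U}

variable {d u}

theorem mem_occSet {n : ℕ} {σ : Equiv.Perm (Fin n)} {i : ℕ} :
    i ∈ occSet d u σ ↔ i < n ∧ i + d ≤ n ∧ consecOcc d u (permWord σ) i := by
  rw [occSet, mem_filter, mem_range]

theorem occSet_subset_range {n : ℕ} (σ : Equiv.Perm (Fin n)) :
    occSet d u σ ⊆ range (n + 1 - d) := fun i hi => by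
  rw [mem_occSet] at hi
  rw [mem_range]
  omega

theorem conCount_permWord {n : ℕ} (σ : Equiv.Perm (Fin n)) :
    conCount d n u (permWord σ) = #(occSet d u σ) := rfl

variable (d u)

theorem gPerm_eq_sum_numExact (n r : ℕ) :
    gPerm d u n r = ∑ U ∈ (range (n + 1 - d)).powerset with #U = r, numExact d u n U := by
  simp only [gPerm, Nat.card_eq_fintype_card, Fintype.card_subtype, conCount_permWord]
  unfold numExact
  convert card_filter_eq_sum_card_filter_eq (occSet d u) occSet_subset_range (#· = r)

theorem gPerm_zero (n : ℕ) : gPerm d u n 0 = numExact d u n ∅ := by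
  rw [gPerm_eq_sum_numExact, ← powersetCard_eq_filter, powersetCard_zero, sum_singleton]

theorem numExact_eq_sum_numMarked (n : ℕ) (U : Finset ℕ) :
    (numExact d u n U : ℤ) = ∑ T ∈ (range (n + 1 - d)).powerset with U ⊆ T,
      (-1) ^ #(T \ U) * (numMarked d u n T : ℤ) := by
  unfold numExact numMarked
  convert card_filter_eq_eq_sum_neg_one_pow (occSet d u) occSet_subset_range U

theorem numMarked_empty (n : ℕ) : numMarked d u n ∅ = n.factorial := by
  simp [numMarked, Fintype.card_perm]

variable {d u}

/-- Marked occurrences on both sides of a cut at `c` that no window straddles interact only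
through the set of values taken on the first `c` positions. -/
theorem numMarked_eq_choose_mul {n c : ℕ} (hc : c ≤ n) (T : Finset ℕ)
    (hT : ∀ i ∈ T, i < c → i + d ≤ c) :
    numMarked d u n T = n.choose c * numMarked d u c {i ∈ T | i < c} *
      numMarked d u (n - c) (T.preimage (· + c) (add_left_injective c).injOn) := by
  unfold numMarked
  convert card_filter_perm_eq_choose_mul hc (T ⊆ occSet d u ·) ({i ∈ T | i < c} ⊆ occSet d u ·)
    (T.preimage (· + c) (add_left_injective c).injOn ⊆ occSet d u ·) fun A π τ => ?_
  have hleft : ∀ i < c, i + d ≤ c → (i ∈ occSet d u (glue hc A π τ) ↔ i ∈ occSet d u π) := by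
    intro i hic hi
    simp only [mem_occSet, hic, hi, show i < n by omega, show i + d ≤ n by omega, true_and]
    exact consecOcc_permWord_iff_of_strictMono _ _ (A.1.orderEmbOfFin A.2).strictMono
      (by omega) hi fun p hp => glue_apply_left hc A π τ (i + p) (by omega)
  have hright : ∀ j, (j + c ∈ occSet d u (glue hc A π τ) ↔ j ∈ occSet d u τ) := by
    intro j
    simp only [mem_occSet, show j + c < n ↔ j < n - c by omega,
      show j + c + d ≤ n ↔ j + d ≤ n - c by omega]
    refine and_congr_right fun _ => and_congr_right fun hj => ?_
    exact consecOcc_permWord_iff_of_strictMono _ _ ((A.1)ᶜ.orderEmbOfFin _).strictMono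
      (by omega) hj fun p hp => (congrArg _ (Fin.ext (by simp only; omega))).trans
        (glue_apply_right hc A π τ (j + p) (by omega))
  simp only [subset_iff, mem_filter, mem_preimage]
  refine ⟨fun h => ⟨fun i hi => (hleft i hi.2 (hT i hi.1 hi.2)).mp (h hi.1),
    fun j hj => (hright j).mp (h hj)⟩, fun ⟨h₁, h₂⟩ i hi => ?_⟩
  rcases lt_or_ge i c with hic | hci
  · exact (hleft i hic (hT i hi hic)).mpr (h₁ ⟨hi, hic⟩)
  · obtain ⟨j, rfl⟩ := Nat.exists_eq_add_of_le' hci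
    exact (hright j).mpr (h₂ hi)

end Marked

section Chains

variable {k a m : ℕ} {T : Finset ℕ}

def IsSpread (k : ℕ) (T : Finset ℕ) : Prop :=
  ∀ i ∈ T, ∀ j ∈ T, i < j → i + k ≤ j

def chain (k a m : ℕ) : Finset ℕ :=
  (range m).image (a + · * k)

theorem mem_chain {i : ℕ} : i ∈ chain k a m ↔ ∃ j < m, a + j * k = i := by
  simp [chain]

theorem add_le_of_mem_chain {i : ℕ} (hi : i ∈ chain k a m) : i + k ≤ a + m * k := by
  obtain ⟨j, hj, rfl⟩ := mem_chain.mp hi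
  have := Nat.mul_le_mul_right k hj
  rw [Nat.succ_mul] at this
  omega

theorem exists_chain_subset_notMem (hk : 0 < k) (T : Finset ℕ) (a : ℕ) :
    ∃ m, chain k a m ⊆ T ∧ a + m * k ∉ T := by
  have hex : ∃ m, a + m * k ∉ T := by
    by_contra! h
    exact T.finite_toSet.not_infinite <| Set.infinite_of_injective_forall_mem
      (fun x y hxy => Nat.eq_of_mul_eq_mul_right hk (Nat.add_left_cancel hxy)) h
  refine ⟨Nat.find hex, fun i hi => ?_, Nat.find_spec hex⟩
  obtain ⟨j, hj, rfl⟩ := mem_chain.mp hi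
  exact not_not.mp (Nat.find_min hex hj)

theorem filter_lt_eq_chain (hk : 0 < k) (hT : IsSpread k T) (hmin : ∀ i ∈ T, a ≤ i)
    (hch : chain k a m ⊆ T) (hend : a + m * k ∉ T) :
    {i ∈ T | i < a + m * k + 1} = chain k a m := by
  ext i
  simp only [mem_filter]
  refine ⟨fun ⟨hi, hlt⟩ => ?_, fun hi => ⟨hch hi, by have := add_le_of_mem_chain hi; omega⟩⟩
  have hne : i ≠ a + m * k := fun h => hend (h ▸ hi)
  have hai := hmin i hi
  have hq : (i - a) / k < m := (Nat.div_lt_iff_lt_mul hk).mpr (by omega)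
  have hmem : a + (i - a) / k * k ∈ T := hch (mem_chain.mpr ⟨_, hq, rfl⟩)
  have hdiv := Nat.div_add_mod' (i - a) k
  have hmod := Nat.mod_lt (i - a) hk
  rcases Nat.eq_zero_or_pos ((i - a) % k) with h0 | hpos
  · exact mem_chain.mpr ⟨_, hq, by omega⟩
  · have := hT _ hmem _ hi (by omega)
    omega

theorem lt_of_chain_subset (hk : 0 < k) (hT : IsSpread k T) (hTm : ∀ i ∈ T, i + k ≤ m * k)
    (hne : T ≠ chain k 0 m) {a m' : ℕ} (hsub : chain k a m' ⊆ T) : m' < m := by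
  by_contra! hle
  have hsub' : chain k a m ⊆ T := (image_subset_image (range_subset_range.mpr hle)).trans hsub
  have hfull : chain k 0 m ⊆ T := by
    rcases m with _ | m
    · simp [chain]
    · have := hTm _ (hsub' (mem_chain.mpr ⟨m, m.lt_succ_self, rfl⟩))
      rw [Nat.succ_mul] at this
      obtain rfl : a = 0 := by omega
      exact hsub'
  refine hne ((filter_true_of_mem fun i hi => ?_).symm.trans
    (filter_lt_eq_chain hk hT (fun _ _ => Nat.zero_le _) hfull fun h => ?_))
  · have := hTm i hi
    omega
  · have := hTm _ h
    omega

theorem IsSpread.preimage_add (hT : IsSpread k T) (c : ℕ) :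
    IsSpread k (T.preimage (· + c) (add_left_injective c).injOn) := fun x hx y hy hxy => by
  have := hT _ (mem_preimage.mp hx) _ (mem_preimage.mp hy) (by omega)
  omega

theorem chain_subset_of_subset_preimage_add {c : ℕ}
    (h : chain k a m ⊆ T.preimage (· + c) (add_left_injective c).injOn) :
    chain k (a + c) m ⊆ T := fun i hi => by
  obtain ⟨j, hj, rfl⟩ := mem_chain.mp hi
  have := mem_preimage.mp (h (mem_chain.mpr ⟨j, hj, rfl⟩))
  rwa [show a + j * k + c = a + c + j * k by omega] at this

theorem card_preimage_add_lt {c : ℕ} (ha : a ∈ T) (hac : a < c) :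
    #(T.preimage (· + c) (add_left_injective c).injOn) < #T := by
  have hsub : (T.preimage (· + c) (add_left_injective c).injOn).map (addRightEmbedding c) ⊆
      T.erase a := fun y hy => by
    obtain ⟨x, hx, rfl⟩ := mem_map.mp hy
    exact mem_erase.mpr ⟨by rw [addRightEmbedding_apply]; omega, mem_preimage.mp hx⟩
  have := card_le_card hsub
  rw [card_map, card_erase_of_mem ha] at this
  have := card_pos.mpr ⟨a, ha⟩
  omega

end Chains

section Clusters

variable {d : ℕ} {v w : ℕ → ℕ}

/-- Permutations covered by a cluster of `m` occurrences of `u`, each sharing its last entry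
with the first entry of the next. -/
noncomputable def clusterNum (d : ℕ) (u : ℕ → ℕ) (m : ℕ) : ℕ :=
  numMarked d u (m * (d - 1) + 1) (chain (d - 1) 0 m)

theorem numMarked_eq_zero_of_not_isSpread {u : ℕ → ℕ} (hu : ∀ i, inOverlap d u i → i = 1)
    {n : ℕ} {T : Finset ℕ} (hT : ¬ IsSpread (d - 1) T) : numMarked d u n T = 0 := by
  simp only [IsSpread, not_forall, not_le] at hT
  obtain ⟨i, hi, j, hj, hij, hji⟩ := hT
  rw [numMarked, card_eq_zero, filter_eq_empty_iff]
  intro σ _ hσ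
  exact not_consecOcc_of_lt_of_lt_s11 hu hij (by omega) (mem_occSet.mp (hσ hi)).2.2
    (mem_occSet.mp (hσ hj)).2.2

theorem numMarked_chain (u : ℕ → ℕ) (a m : ℕ) :
    numMarked d u (a + m * (d - 1) + 1) (chain (d - 1) a m) =
      (a + m * (d - 1) + 1).choose a * a.factorial * clusterNum d u m := by
  rw [numMarked_eq_choose_mul (c := a) (by omega) _ fun i hi hia => ?_]
  · have hpre : {i ∈ chain (d - 1) a m | i < a} = ∅ :=
      filter_false_of_mem fun i hi => by obtain ⟨j, _, rfl⟩ := mem_chain.mp hi; omega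
    have hsuf : (chain (d - 1) a m).preimage (· + a) (add_left_injective a).injOn =
        chain (d - 1) 0 m := by
      ext x
      simp only [mem_preimage, mem_chain]
      exact exists_congr fun j => and_congr_right fun _ => by omega
    rw [hpre, hsuf, numMarked_empty, clusterNum,
      show a + m * (d - 1) + 1 - a = m * (d - 1) + 1 by omega]
  · obtain ⟨j, _, rfl⟩ := mem_chain.mp hi
    omega

/-- For spread sets the numbers of marked permutations are products of binomial coefficients,
factorials and cluster numbers; so they agree for two patterns with the same cluster numbers. -/
theorem numMarked_eq_of_clusterNum_eq (hd : 2 ≤ d) {n : ℕ} {T : Finset ℕ}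
    (hTn : T ⊆ range (n + 1 - d)) (hT : IsSpread (d - 1) T)
    (hcl : ∀ a m, chain (d - 1) a m ⊆ T → clusterNum d v m = clusterNum d w m) :
    numMarked d v n T = numMarked d w n T := by
  induction hN : #T using Nat.strong_induction_on generalizing n T with
  | _ N ih =>
  rcases T.eq_empty_or_nonempty with rfl | hne
  · rw [numMarked_empty, numMarked_empty]
  set a := T.min' hne
  have hmin : ∀ i ∈ T, a ≤ i := fun i hi => T.min'_le i hi
  obtain ⟨m, hch, hend⟩ := exists_chain_subset_notMem (k := d - 1) (by omega) T a
  set c := a + m * (d - 1) + 1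
  have hpre : {i ∈ T | i < c} = chain (d - 1) a m :=
    filter_lt_eq_chain (by omega) hT hmin hch hend
  have hcut : ∀ i ∈ T, i < c → i + d ≤ c := fun i hi hic => by
    have := add_le_of_mem_chain (hpre ▸ mem_filter.mpr ⟨hi, hic⟩)
    omega
  have hcn : c ≤ n := by
    have ha : a ∈ T := T.min'_mem hne
    have hm : m ≠ 0 := by rintro rfl; exact hend (by simpa using ha)
    obtain ⟨m, rfl⟩ := Nat.exists_eq_succ_of_ne_zero hm
    have hlast := mem_range.mp (hTn (hch (mem_chain.mpr ⟨m, m.lt_succ_self, rfl⟩)))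
    have hc : c = a + m * (d - 1) + (d - 1) + 1 := by simp only [c, Nat.succ_mul]; omega
    omega
  set T' := T.preimage (· + c) (add_left_injective c).injOn
  have hT' : numMarked d v (n - c) T' = numMarked d w (n - c) T' := by
    refine ih _ (hN ▸ card_preimage_add_lt (T.min'_mem hne) (by omega)) (fun x hx => ?_)
      (hT.preimage_add c) (fun a' m' hsub => hcl _ m' (chain_subset_of_subset_preimage_add hsub))
      rfl
    have := mem_range.mp (hTn (mem_preimage.mp hx))
    rw [mem_range]
    omega
  rw [numMarked_eq_choose_mul hcn T hcut, numMarked_eq_choose_mul hcn T hcut, hpre,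
    numMarked_chain, numMarked_chain, hcl a m hch, hT']

/-- At length `m (d - 1) + 1` the full chain is the only spread set containing a chain of length
`m`, so inclusion–exclusion for `numExact ∅` isolates the `m`-th cluster number. -/
theorem clusterNum_eq_of_numExact_empty_eq (hd : 2 ≤ d) (hv : ∀ i, inOverlap d v i → i = 1)
    (hw : ∀ i, inOverlap d w i → i = 1) (h0 : ∀ n, numExact d v n ∅ = numExact d w n ∅)
    (m : ℕ) : clusterNum d v m = clusterNum d w m := by
  induction m using Nat.strong_induction_on with
  | _ m ih =>
  set n := m * (d - 1) + 1
  set C := chain (d - 1) 0 m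
  have hbound : ∀ {T : Finset ℕ}, T ⊆ range (n + 1 - d) → ∀ i ∈ T, i + (d - 1) ≤ m * (d - 1) :=
    fun hT i hi => by have := mem_range.mp (hT hi); omega
  have hC : C ∈ (range (n + 1 - d)).powerset := mem_powerset.mpr fun i hi => by
    have := add_le_of_mem_chain hi
    rw [mem_range]
    omega
  have hothers : ∀ T ∈ ((range (n + 1 - d)).powerset).erase C,
      (-1) ^ #T * (numMarked d v n T : ℤ) = (-1) ^ #T * (numMarked d w n T : ℤ) := by
    intro T hT
    obtain ⟨hTC, hT⟩ := mem_erase.mp hT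
    rw [mem_powerset] at hT
    by_cases hsp : IsSpread (d - 1) T
    · rw [numMarked_eq_of_clusterNum_eq hd hT hsp fun a m' hsub =>
        ih m' (lt_of_chain_subset (by omega) hsp (hbound hT) hTC hsub)]
    · rw [numMarked_eq_zero_of_not_isSpread hv hsp, numMarked_eq_zero_of_not_isSpread hw hsp]
  have hsum : ∀ u, (numExact d u n ∅ : ℤ) = (-1) ^ #C * (numMarked d u n C : ℤ) +
      ∑ T ∈ ((range (n + 1 - d)).powerset).erase C, (-1) ^ #T * (numMarked d u n T : ℤ) := by
    intro u
    rw [numExact_eq_sum_numMarked]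
    simp only [empty_subset, filter_true, sdiff_empty]
    exact (add_sum_erase _ _ hC).symm
  have hC' : (-1) ^ #C * (clusterNum d v m : ℤ) = (-1) ^ #C * (clusterNum d w m : ℤ) := by
    have h0n : (numExact d v n ∅ : ℤ) = numExact d w n ∅ := by exact_mod_cast h0 n
    have hv' := hsum v
    rw [sum_congr rfl hothers] at hv'
    show (-1) ^ #C * (numMarked d v n C : ℤ) = (-1) ^ #C * (numMarked d w n C : ℤ)
    linarith [hsum w]
  exact_mod_cast mul_left_cancel₀ (pow_ne_zero _ (by norm_num)) hC'

theorem numMarked_eq_of_forall_clusterNum_eq (hd : 2 ≤ d) (hv : ∀ i, inOverlap d v i → i = 1)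
    (hw : ∀ i, inOverlap d w i → i = 1) (hcl : ∀ m, clusterNum d v m = clusterNum d w m)
    {n : ℕ} {T : Finset ℕ} (hT : T ⊆ range (n + 1 - d)) :
    numMarked d v n T = numMarked d w n T := by
  by_cases hsp : IsSpread (d - 1) T
  · exact numMarked_eq_of_clusterNum_eq hd hT hsp fun _ m _ => hcl m
  · rw [numMarked_eq_zero_of_not_isSpread hv hsp, numMarked_eq_zero_of_not_isSpread hw hsp]

end Clusters

theorem nonoverlapping_cWilf_implies_strong_general (d : ℕ)
    (v w : Equiv.Perm (Fin d))
    (hv : ∀ i, inOverlap d (permWord v) i ↔ i = 1)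
    (hw : ∀ i, inOverlap d (permWord w) i ↔ i = 1)
    (h0 : ∀ n : ℕ, gPerm d (permWord v) n 0 = gPerm d (permWord w) n 0) :
    ∀ n r : ℕ, gPerm d (permWord v) n r = gPerm d (permWord w) n r := by
  have hd : 2 ≤ d := ((hv 1).mpr rfl).2.1
  have hcl := clusterNum_eq_of_numExact_empty_eq hd (fun i => (hv i).mp) (fun i => (hw i).mp)
    fun n => by simpa only [gPerm_zero] using h0 n
  intro n r
  rw [gPerm_eq_sum_numExact, gPerm_eq_sum_numExact]
  refine sum_congr rfl fun U _ => ?_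
  have hU := numExact_eq_sum_numMarked d (permWord v) n U
  rw [sum_congr rfl fun T hT => by
      rw [numMarked_eq_of_forall_clusterNum_eq hd (fun i => (hv i).mp) (fun i => (hw i).mp) hcl
        (mem_powerset.mp (mem_filter.mp hT).1)],
    ← numExact_eq_sum_numMarked] at hU
  exact_mod_cast hU

/-- Non-overlapping patterns that are c-Wilf-equivalent in permutations are strongly
c-Wilf-equivalent in permutations. -/
theorem nonoverlapping_cWilf_implies_strong (d : ℕ) (hd : 3 ≤ d)
    (v w : Equiv.Perm (Fin d))
    (hv : ∀ i, inOverlap d (permWord v) i ↔ i = 1)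
    (hw : ∀ i, inOverlap d (permWord w) i ↔ i = 1)
    (h0 : ∀ n : ℕ, gPerm d (permWord v) n 0 = gPerm d (permWord w) n 0) :
    ∀ n r : ℕ, gPerm d (permWord v) n r = gPerm d (permWord w) n r :=
  nonoverlapping_cWilf_implies_strong_general d v w hv hw h0
end

section
/- Let m ≥ 2 and 0 < β < 1, and suppose δ ∈ (0,1) satisfies δ^{m-1} - δ^m > β. Then the polynomial f(x) = x^m - x^{m-1} - β has exactly m-1 roots (counted with multiplicity) in the open disk |x| < δ, and exactly one root with |x| ≥ δ; moreover that root is real. -/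
/-!
Write the equation as `z ^ (m - 1) * (z - 1) = β`. A root with `δ ≤ ‖z‖` has
`‖z‖ ^ (m - 1) * ‖z - 1‖ = β < δ ^ (m - 1) * (1 - δ)`, and since `t ↦ t * (1 - t) ^ (m - 1)`
decreases on `[1/m, 1]` this forces `‖z - 1‖ < 1/m`. In that disk `0 < |arg z| < π/m`, so
`Im (z ^ m)` has the sign of `Im z`, whereas multiplying the equation by `conj z ^ m` gives
`β * Im (z ^ m) = -‖z‖ ^ (2 (m - 1)) * Im z`. Hence `z` is real, and as `x ↦ x ^ (m - 1) * (x - 1)`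
is increasing on `[1, ∞)`, `z` is the real root `r ≥ 1`, which is simple since `f' r ≠ 0`.
The other `m - 1` roots lie in the disk `‖z‖ < δ`.
-/

open Polynomial Real

attribute [local instance] Classical.propDecidable

section Real

variable (n : ℕ)

theorem strictAntiOn_mul_one_sub_pow :
    StrictAntiOn (fun t : ℝ => t * (1 - t) ^ (n + 1)) (Set.Icc (1 / (n + 2)) 1) := by
  refine strictAntiOn_of_deriv_neg (convex_Icc _ _) (by fun_prop) fun t ht => ?_
  rw [interior_Icc] at ht
  have hderiv : HasDerivAt (fun t : ℝ => t * (1 - t) ^ (n + 1))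
      ((1 - t) ^ n * (1 - (n + 2) * t)) t := by
    refine ((hasDerivAt_id' t).mul (((hasDerivAt_id' t).const_sub 1).pow (n + 1))).congr_deriv ?_
    simp only [Pi.pow_apply, Nat.add_sub_cancel]
    push_cast
    ring
  have ht' : 1 < (n + 2) * t := by
    have := ht.1
    rw [div_lt_iff₀ (by positivity)] at this
    linarith
  rw [hderiv.deriv]
  exact mul_neg_of_pos_of_neg (pow_pos (by linarith [ht.2]) n) (by linarith)

theorem strictMonoOn_pow_succ_mul_sub_one :
    StrictMonoOn (fun x : ℝ => x ^ (n + 1) * (x - 1)) (Set.Ici 1) := by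
  intro a ha b _ hab
  have ha : (1 : ℝ) ≤ a := ha
  have : a ^ (n + 1) ≤ b ^ (n + 1) := by gcongr
  dsimp only
  nlinarith [pow_pos (show (0 : ℝ) < b by linarith) (n + 1)]

theorem exists_one_le_pow_succ_mul_sub_one_eq {β : ℝ} (hβ : 0 ≤ β) :
    ∃ r : ℝ, 1 ≤ r ∧ r ^ (n + 1) * (r - 1) = β := by
  have hβle : β ≤ (1 + β) ^ (n + 1) * (1 + β - 1) := by
    rw [add_sub_cancel_left]
    exact le_mul_of_one_le_left hβ (one_le_pow₀ (by linarith))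
  obtain ⟨r, hr, hrβ⟩ := intermediate_value_Icc (by linarith : (1 : ℝ) ≤ 1 + β)
    (f := fun x : ℝ => x ^ (n + 1) * (x - 1)) (by fun_prop) ⟨by simpa using hβ, hβle⟩
  exact ⟨r, hr.1, hrβ⟩

end Real

section Complex

open ComplexConjugate

variable {n : ℕ}

theorem Complex.im_pow_pos {z : ℂ} {k : ℕ} (hk : 0 < k) (harg : 0 < z.arg)
    (hkarg : k * z.arg < π) : 0 < (z ^ k).im := by
  have hz : z ≠ 0 := by rintro rfl; simp at harg
  have hpolar :
      z ^ k = ‖z‖ ^ k * (Complex.cos (k * z.arg) + Complex.sin (k * z.arg) * Complex.I) := by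
    rw [← Complex.cos_add_sin_mul_I_pow, ← mul_pow, Complex.norm_mul_cos_add_sin_mul_I]
  have him : (z ^ k).im = ‖z‖ ^ k * Real.sin (k * z.arg) := by
    rw [hpolar]
    simp only [Complex.mul_im, ← Complex.ofReal_natCast, ← Complex.ofReal_mul,
      ← Complex.ofReal_cos, ← Complex.ofReal_sin, ← Complex.ofReal_pow, Complex.add_im,
      Complex.add_re, Complex.ofReal_re, Complex.ofReal_im, Complex.I_re, Complex.I_im]
    ring
  rw [him]
  exact mul_pos (by positivity) (Real.sin_pos_of_pos_of_lt_pi (by positivity) hkarg)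

theorem norm_sub_one_lt_of_pow_succ_mul_sub_one_eq {δ : ℝ} {c z : ℂ} (hδ : 0 ≤ δ)
    (hc : ‖c‖ < δ ^ (n + 1) * (1 - δ)) (hz : z ^ (n + 1) * (z - 1) = c) (hzδ : δ ≤ ‖z‖) :
    ‖z - 1‖ < 1 / (n + 2) := by
  set t := ‖z - 1‖
  have hnorm : ‖z‖ ^ (n + 1) * t = ‖c‖ := by rw [← hz, norm_mul, norm_pow]
  have htδ : t < 1 - δ := by
    refine lt_of_mul_lt_mul_left ?_ (pow_nonneg hδ (n + 1))
    calc δ ^ (n + 1) * t ≤ ‖z‖ ^ (n + 1) * t := by gcongr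
      _ < δ ^ (n + 1) * (1 - δ) := hnorm ▸ hc
  have hzt : 1 - t ≤ ‖z‖ := by
    simpa [t, norm_sub_rev z 1, add_comm] using norm_sub_norm_le (1 : ℂ) z
  by_contra! htn
  have : δ ^ (n + 1) * (1 - δ) < ‖c‖ :=
    calc δ ^ (n + 1) * (1 - δ) = (1 - δ) * (1 - (1 - δ)) ^ (n + 1) := by ring
      _ < t * (1 - t) ^ (n + 1) :=
          strictAntiOn_mul_one_sub_pow n ⟨htn, by linarith⟩ ⟨htn.trans htδ.le, by linarith⟩ htδ
      _ ≤ t * ‖z‖ ^ (n + 1) := by gcongr; linarith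
      _ = ‖c‖ := by rw [← hnorm, mul_comm]
  exact lt_asymm hc this

theorem arg_pos_and_mul_arg_lt_pi_of_norm_sub_one_lt {z : ℂ} (hz : ‖z - 1‖ < 1 / (n + 2))
    (him : 0 < z.im) :
    0 < z.arg ∧ ((n + 2 : ℕ) : ℝ) * z.arg < π := by
  have hre : (n + 1) / (n + 2) < z.re := by
    have := (abs_lt.1 ((Complex.abs_re_le_norm (z - 1)).trans_lt hz)).1
    rw [Complex.sub_re, Complex.one_re] at this
    have : (n + 1) / (n + 2) = 1 - 1 / (n + 2 : ℝ) := by field_simp; ring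
    linarith
  have him' : z.im < 1 / (n + 2) := by
    simpa using (Complex.abs_im_le_norm (z - 1)).trans_lt hz |> (le_abs_self _).trans_lt
  have hre0 : 0 < z.re := lt_trans (by positivity) hre
  have harg : 0 < z.arg :=
    (Complex.arg_nonneg_iff.2 him.le).lt_of_ne fun h => him.ne' (Complex.arg_eq_zero_iff.1 h.symm).2
  have harg' : z.arg < 1 / (n + 1) :=
    calc z.arg < Real.tan z.arg :=
          Real.lt_tan harg (Complex.arg_lt_pi_div_two_iff.2 (Or.inl hre0))
      _ = z.im / z.re := Complex.tan_arg z
      _ < 1 / (n + 1) := by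
        rw [div_lt_div_iff₀ hre0 (by positivity), one_mul]
        rw [div_lt_iff₀ (by positivity)] at hre
        rw [lt_div_iff₀ (by positivity)] at him'
        nlinarith
  refine ⟨harg, ?_⟩
  calc ((n + 2 : ℕ) : ℝ) * z.arg < (n + 2) * (1 / (n + 1)) := by push_cast; gcongr
    _ ≤ 2 := by rw [mul_one_div, div_le_iff₀ (by positivity)]; linarith
    _ < π := by linarith [Real.pi_gt_three]

theorem im_pow_eq_of_pow_succ_mul_sub_one_eq {β : ℝ} {z : ℂ} (hz : z ^ (n + 1) * (z - 1) = β) :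
    β * (z ^ (n + 2)).im = -(Complex.normSq z ^ (n + 1) * z.im) := by
  have h : (β : ℂ) * conj z ^ (n + 2) =
      Complex.normSq z ^ (n + 1) * (Complex.normSq z - conj z) := by
    rw [← hz, ← Complex.mul_conj]
    ring
  rw [← map_pow, ← Complex.ofReal_pow] at h
  have him := congrArg Complex.im h
  simp only [Complex.mul_im, Complex.sub_im, Complex.sub_re, Complex.ofReal_re, Complex.ofReal_im,
    Complex.conj_im, Complex.conj_re] at him
  linarith

theorem im_eq_zero_of_pow_succ_mul_sub_one_eq {β : ℝ} {z : ℂ} (hβ : 0 < β)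
    (hz : z ^ (n + 1) * (z - 1) = β) (hloc : ‖z - 1‖ < 1 / (n + 2)) : z.im = 0 := by
  have not_im_pos : ∀ w : ℂ, w ^ (n + 1) * (w - 1) = β → ‖w - 1‖ < 1 / (n + 2) → ¬0 < w.im := by
    intro w hw hwloc hwim
    obtain ⟨harg, hargπ⟩ := arg_pos_and_mul_arg_lt_pi_of_norm_sub_one_lt hwloc hwim
    have hpow := Complex.im_pow_pos (by omega) harg hargπ
    have hnormSq : 0 < Complex.normSq w := Complex.normSq_pos.2 fun h => by simp [h] at hwim
    have := im_pow_eq_of_pow_succ_mul_sub_one_eq hw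
    nlinarith [mul_pos hβ hpow, mul_pos (pow_pos hnormSq (n + 1)) hwim]
  refine le_antisymm (not_lt.1 (not_im_pos z hz hloc)) ?_
  have hconj : conj z ^ (n + 1) * (conj z - 1) = β := by simpa using congrArg conj hz
  simpa using not_im_pos (conj z) hconj (by rwa [← map_one conj, ← map_sub, Complex.norm_conj])

theorem eq_of_pow_succ_mul_sub_one_eq {β δ r : ℝ} {z : ℂ} (hβ : 0 < β) (hδ : 0 ≤ δ)
    (hδβ : β < δ ^ (n + 1) * (1 - δ)) (hr1 : 1 ≤ r) (hr : r ^ (n + 1) * (r - 1) = β)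
    (hz : z ^ (n + 1) * (z - 1) = β) (hzδ : δ ≤ ‖z‖) : z = r := by
  have hloc : ‖z - 1‖ < 1 / (n + 2) := norm_sub_one_lt_of_pow_succ_mul_sub_one_eq hδ
    (by rwa [Complex.norm_real, Real.norm_of_nonneg hβ.le]) hz hzδ
  have hzre : z = z.re :=
    Complex.ext rfl (by simp [im_eq_zero_of_pow_succ_mul_sub_one_eq hβ hz hloc])
  set x := z.re
  have hx : x ^ (n + 1) * (x - 1) = β := by
    rw [hzre] at hz
    exact_mod_cast hz
  have hx0 : 0 < x := by
    rw [hzre, ← Complex.ofReal_one, ← Complex.ofReal_sub, Complex.norm_real, Real.norm_eq_abs]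
      at hloc
    have : 1 / (n + 2 : ℝ) ≤ 1 := by rw [div_le_one (by positivity)]; linarith
    linarith [neg_abs_le (x - 1)]
  have hx1 : 1 ≤ x := by
    linarith [pos_of_mul_pos_right (hx ▸ hβ) (pow_nonneg hx0.le (n + 1))]
  rw [hzre, (strictMonoOn_pow_succ_mul_sub_one n).injOn hx1 hr1 (hx.trans hr.symm)]

end Complex

section Polynomial

variable {K : Type*} [Field K] (n : ℕ) (c : K)

theorem isRoot_X_pow_sub_X_pow_sub_C_iff {z : K} :
    (X ^ (n + 2) - X ^ (n + 1) - C c).IsRoot z ↔ z ^ (n + 1) * (z - 1) = c := by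
  rw [IsRoot, eval_sub, eval_sub, eval_pow, eval_pow, eval_X, eval_C, sub_eq_zero]
  ring_nf

theorem natDegree_X_pow_sub_X_pow_sub_C :
    (X ^ (n + 2) - X ^ (n + 1) - C c).natDegree = n + 2 := by
  compute_degree!

theorem X_pow_sub_X_pow_sub_C_ne_zero : X ^ (n + 2) - X ^ (n + 1) - C c ≠ 0 :=
  ne_zero_of_natDegree_gt (n := 0) (by rw [natDegree_X_pow_sub_X_pow_sub_C]; omega)

theorem rootMultiplicity_X_pow_sub_X_pow_sub_C {z : K}
    (hz : (X ^ (n + 2) - X ^ (n + 1) - C c).IsRoot z) (hz0 : z ≠ 0) (hz1 : (n + 2) * z ≠ n + 1) :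
    (X ^ (n + 2) - X ^ (n + 1) - C c).rootMultiplicity z = 1 := by
  have hne := X_pow_sub_X_pow_sub_C_ne_zero n c
  refine le_antisymm (not_lt.1 fun h => ?_) ((rootMultiplicity_pos hne).2 hz)
  have hderiv := ((one_lt_rootMultiplicity_iff_isRoot hne).1 h).2
  have : (derivative (X ^ (n + 2) - X ^ (n + 1) - C c)).eval z =
      z ^ n * ((n + 2) * z - (n + 1)) := by
    simp only [derivative_sub, derivative_X_pow, derivative_C, eval_sub, eval_mul, eval_C,
      eval_pow, eval_X, eval_zero]
    push_cast
    ring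
  rw [IsRoot, this] at hderiv
  exact mul_ne_zero (pow_ne_zero n hz0) (sub_ne_zero.2 hz1) hderiv

end Polynomial

theorem rouche_root_location_general (m : ℕ) (hm : 2 ≤ m) (β δ : ℝ)
    (hβ : 0 < β) (hδ0 : 0 < δ) (hδ1 : δ < 1)
    (hδβ : β < δ ^ (m - 1) - δ ^ m)
    (f : Polynomial ℂ) (hf : f = X ^ m - X ^ (m - 1) - C (β : ℂ)) :
    Multiset.card (f.roots.filter (fun z => ‖z‖ < δ)) = m - 1 ∧
    Multiset.card (f.roots.filter (fun z => δ ≤ ‖z‖)) = 1 ∧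
    ∀ z ∈ f.roots, δ ≤ ‖z‖ → z.im = 0 := by
  obtain ⟨n, rfl⟩ : ∃ n, m = n + 2 := ⟨m - 2, by omega⟩
  rw [show n + 2 - 1 = n + 1 from rfl] at hf hδβ ⊢
  have hδβ' : β < δ ^ (n + 1) * (1 - δ) := by rw [mul_one_sub, ← pow_succ]; simpa using hδβ
  have hf0 : f ≠ 0 := hf ▸ X_pow_sub_X_pow_sub_C_ne_zero n _
  have hroot {z : ℂ} : z ∈ f.roots ↔ z ^ (n + 1) * (z - 1) = β := by
    rw [mem_roots hf0, hf, isRoot_X_pow_sub_X_pow_sub_C_iff]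
  obtain ⟨r, hr1, hr⟩ := exists_one_le_pow_succ_mul_sub_one_eq n hβ.le
  have hrC : (r : ℂ) ^ (n + 1) * (r - 1) = β := by exact_mod_cast hr
  have hlarge : ∀ z ∈ f.roots, δ ≤ ‖z‖ ↔ z = r := fun z hz =>
    ⟨eq_of_pow_succ_mul_sub_one_eq hβ hδ0.le hδβ' hr1 hr (hroot.1 hz), fun h => by
      rw [h, Complex.norm_real, Real.norm_of_nonneg (by linarith)]; linarith⟩
  have hcount : f.roots.count (r : ℂ) = 1 := by
    rw [count_roots, hf]
    exact rootMultiplicity_X_pow_sub_X_pow_sub_C n _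
      ((isRoot_X_pow_sub_X_pow_sub_C_iff n _).2 hrC) (by exact_mod_cast (by linarith : r ≠ 0))
      (by exact_mod_cast (by nlinarith : (n + 2) * r ≠ n + 1))
  have hcard_large : Multiset.card (f.roots.filter (fun z => δ ≤ ‖z‖)) = 1 := by
    rw [Multiset.filter_congr hlarge, Multiset.filter_eq', Multiset.card_replicate, hcount]
  have hcard : Multiset.card f.roots = n + 2 := by
    rw [IsAlgClosed.card_roots_eq_natDegree, hf, natDegree_X_pow_sub_X_pow_sub_C]
  refine ⟨?_, hcard_large, fun z hz hzδ => by rw [(hlarge z hz).1 hzδ, Complex.ofReal_im]⟩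
  have := congrArg Multiset.card (Multiset.filter_add_not (fun z => ‖z‖ < δ) f.roots)
  simp only [not_lt, Multiset.card_add, hcard_large, hcard] at this
  omega

/-- Rouché-type root location: if `m ≥ 2`, `0 < β < 1`, and `δ ∈ (0,1)` satisfies
`δ^{m-1} - δ^m > β`, then `f(x) = x^m - x^{m-1} - β` has exactly `m-1` roots (with
multiplicity) in the open disk `|x| < δ`, exactly one root with `|x| ≥ δ`, and that
root is real. -/
theorem rouche_root_location (m : ℕ) (hm : 2 ≤ m) (β δ : ℝ)
    (hβ : 0 < β) (hβ1 : β < 1) (hδ0 : 0 < δ) (hδ1 : δ < 1)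
    (hδβ : β < δ ^ (m - 1) - δ ^ m)
    (f : Polynomial ℂ) (hf : f = X ^ m - X ^ (m - 1) - C (β : ℂ)) :
    Multiset.card (f.roots.filter (fun z => ‖z‖ < δ)) = m - 1 ∧
    Multiset.card (f.roots.filter (fun z => δ ≤ ‖z‖)) = 1 ∧
    ∀ z ∈ f.roots, δ ≤ ‖z‖ → z.im = 0 :=
  rouche_root_location_general m hm β δ hβ hδ0 hδ1 hδβ f hf
end
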